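/- arXiv:2011.04903 — 10 statements merged into one kernel-verified Lean document; each statement's English description precedes it below -/
import Mathlib

section
/- Let d = d1*d2 with 2 ≤ d1 ≤ d2, and let S = {ψ_1, ..., ψ_N} ⊆ C^d be an absolutely entangled set with respect to the bipartition (d1, d2). Then for every i ∈ {1,...,N}, the complex linear span of S \ {ψ_i} has dimension at least d2 + 1. -/
noncomputable section

def ProdVec (d1 d2 : ℕ) (ψ : EuclideanSpace ℂ (Fin d1 × Fin d2)) : Prop :=
  ∃ (u : Fin d1 → ℂ) (v : Fin d2 → ℂ), ∀ p : Fin d1 × Fin d2, ψ p = u p.1 * v p.2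

/-- A family of states is absolutely entangled w.r.t. `(d1,d2)` if every unitary image of it
contains at least one non-product vector. -/
def AbsolutelyEntangled (d1 d2 N : ℕ) (ψ : Fin N → EuclideanSpace ℂ (Fin d1 × Fin d2)) : Prop :=
  ∀ U : EuclideanSpace ℂ (Fin d1 × Fin d2) ≃ₗᵢ[ℂ] EuclideanSpace ℂ (Fin d1 × Fin d2),
    ∃ i : Fin N, ¬ ProdVec d1 d2 (U (ψ i))

/-!
Suppose the span `W` of the vectors other than `ψ i` had dimension at most `d2`. Write
`ψ i = w + z` with `w ∈ W` and `z ⊥ W`. Index an orthonormal basis of `ℂ^{d1} ⊗ ℂ^{d2}` by pairs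
`(a, c)` so that an orthonormal basis of `W` whose first vector is along `w` fills part of row `0`,
starting at `(0, 0)`, and the direction of `z` sits at `(1, 0)`. Then `W` lies in the span of
row `0` and `ψ i` in the span of column `0`. The unitary sending this basis to the standard one maps
the span of a row (resp. column) to vectors `e_a ⊗ v` (resp. `u ⊗ f_c`), so it makes every `ψ j`
a product vector.
-/

open Module Submodule

theorem Submodule.coe_mem_span_image_of_comp_eq {R M ι κ : Type*} [Semiring R] [AddCommMonoid M]
    [Module R M] {K : Submodule R M} {v : κ → K} {u : ι → M} {f : κ → ι}
    (h : ∀ j, u (f j) = v j) {T : Set κ} {y : K} (hy : y ∈ span R (v '' T)) :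
    (y : M) ∈ span R (u '' (f '' T)) := by
  have himage : u '' (f '' T) = K.subtype '' (v '' T) := by
    simp only [Set.image_image, h, subtype_apply]
  rw [himage, span_image]
  exact mem_map_of_mem hy

section
variable {𝕜 E : Type*} [RCLike 𝕜] [NormedAddCommGroup E] [InnerProductSpace 𝕜 E]

theorem exists_norm_eq_one_mem_span_singleton [Nontrivial E] (v : E) :
    ∃ e : E, ‖e‖ = 1 ∧ v ∈ 𝕜 ∙ e := by
  obtain ⟨y, hy, hvy⟩ : ∃ y ≠ (0 : E), v ∈ 𝕜 ∙ y := by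
    by_cases hv : v = 0
    · obtain ⟨y, hy⟩ := exists_ne (0 : E)
      exact ⟨y, hy, hv ▸ zero_mem _⟩
    · exact ⟨v, hv, mem_span_singleton_self v⟩
  refine ⟨(‖y‖⁻¹ : 𝕜) • y, norm_smul_inv_norm hy, ?_⟩
  rwa [span_singleton_smul_eq (by simpa using hy)]

theorem Orthonormal.exists_orthonormalBasis_comp_eq [FiniteDimensional 𝕜 E] {ι κ : Type*}
    [Fintype ι] (hcard : finrank 𝕜 E = Fintype.card ι) {u : κ → E} (hu : Orthonormal 𝕜 u)
    {g : κ → ι} (hg : Function.Injective g) :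
    ∃ b : OrthonormalBasis ι 𝕜 E, ∀ j, b (g j) = u j := by
  have hext : Orthonormal 𝕜 ((Set.range g).domRestrict (Function.extend g u 0)) := by
    convert hu.comp _ (Equiv.ofInjective g hg).symm.injective
    ext ⟨_, j, rfl⟩ : 1
    simp [Set.domRestrict, hg.extend_apply]
  obtain ⟨b, hb⟩ := hext.exists_orthonormalBasis_extension_of_card_eq hcard
  exact ⟨b, fun j => (hb _ ⟨j, rfl⟩).trans (hg.extend_apply u 0 j)⟩

theorem orthonormal_option_elim {κ : Type*} {K : Submodule 𝕜 E} {v : κ → K}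
    (hv : Orthonormal 𝕜 v) {e : E} (he : ‖e‖ = 1) (heK : e ∈ Kᗮ) :
    Orthonormal 𝕜 (fun o : Option κ => o.elim e fun j => (v j : E)) := by
  classical
  rw [orthonormal_iff_ite] at hv ⊢
  rintro (_ | i) (_ | j)
  · simp [he]
  · simpa using inner_left_of_mem_orthogonal (v j).2 heK
  · simpa using inner_right_of_mem_orthogonal (v i).2 heK
  · simpa [← Submodule.coe_inner] using hv i j

theorem exists_orthonormalBasis_mem_span_image_val_eq_zero [FiniteDimensional 𝕜 E] (v : E) :
    ∃ b : OrthonormalBasis (Fin (finrank 𝕜 E)) 𝕜 E, v ∈ span 𝕜 (b '' {j | (j : ℕ) = 0}) := by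
  rcases (finrank 𝕜 E).eq_zero_or_pos with h | h
  · have : Subsingleton E := finrank_zero_iff.1 h
    exact ⟨stdOrthonormalBasis 𝕜 E, Subsingleton.eq_zero v ▸ zero_mem _⟩
  · have : Nontrivial E := finrank_pos_iff.1 h
    obtain ⟨e, he, hve⟩ := exists_norm_eq_one_mem_span_singleton (𝕜 := 𝕜) v
    have hsingle : Orthonormal 𝕜 (({⟨0, h⟩} : Set (Fin (finrank 𝕜 E))).domRestrict fun _ => e) :=
      orthonormal_subsingleton_iff.2 fun _ => he
    obtain ⟨b, hb⟩ := hsingle.exists_orthonormalBasis_extension_of_card_eq (by simp)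
    refine ⟨b, span_mono ?_ hve⟩
    rw [Set.singleton_subset_iff]
    exact ⟨⟨0, h⟩, rfl, hb _ rfl⟩

theorem exists_orthonormalBasis_le_span_row_mem_span_col [FiniteDimensional 𝕜 E]
    {d1 d2 : ℕ} (hd1 : 1 < d1) (hd2 : 0 < d2) (hE : finrank 𝕜 E = d1 * d2) (W : Submodule 𝕜 E)
    (hW : finrank 𝕜 W ≤ d2) (x : E) :
    ∃ (b : OrthonormalBasis (Fin d1 × Fin d2) 𝕜 E) (a : Fin d1) (c : Fin d2),
      W ≤ span 𝕜 (b '' {p | p.1 = a}) ∧ x ∈ span 𝕜 (b '' {p | p.2 = c}) := by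
  obtain ⟨w, hw, z, hz, rfl⟩ := W.exists_add_mem_mem_orthogonal x
  obtain ⟨bW, hwbW⟩ := exists_orthonormalBasis_mem_span_image_val_eq_zero (𝕜 := 𝕜) (⟨w, hw⟩ : W)
  have : Nontrivial Wᗮ := finrank_pos_iff.1 (by
    have := W.finrank_add_finrank_orthogonal
    nlinarith)
  obtain ⟨e, he, hze⟩ := exists_norm_eq_one_mem_span_singleton (𝕜 := 𝕜) (⟨z, hz⟩ : Wᗮ)
  let a : Fin d1 := ⟨0, by omega⟩
  let c : Fin d2 := ⟨0, hd2⟩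
  let g : Option (Fin (finrank 𝕜 W)) → Fin d1 × Fin d2 :=
    fun o => o.elim (⟨1, hd1⟩, c) fun j => (a, Fin.castLE hW j)
  have hg : Function.Injective g := by
    rintro (_ | i) (_ | j) h <;> simp_all [g, a, Fin.ext_iff]
  obtain ⟨b, hb⟩ := (orthonormal_option_elim bW.orthonormal (by simpa using he)
    e.2).exists_orthonormalBasis_comp_eq (by simp [hE]) hg
  refine ⟨b, a, c, fun y hy => ?_, add_mem ?_ ?_⟩
  · have hyb := coe_mem_span_image_of_comp_eq (fun j => hb (some j)) (T := Set.univ)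
      (y := ⟨y, hy⟩) (by simpa using bW.toBasis.mem_span ⟨y, hy⟩)
    refine span_mono ?_ hyb
    rintro _ ⟨_, ⟨j, -, rfl⟩, rfl⟩
    exact ⟨_, rfl, rfl⟩
  · refine span_mono ?_ (coe_mem_span_image_of_comp_eq (fun j => hb (some j)) hwbW)
    rintro _ ⟨_, ⟨j, hj, rfl⟩, rfl⟩
    exact ⟨g (some j), Fin.ext hj, rfl⟩
  · obtain ⟨r, hr⟩ := mem_span_singleton.1 hze
    rw [show z = r • (e : E) from (congrArg Subtype.val hr).symm]
    exact smul_mem _ _ (subset_span ⟨g none, rfl, hb none⟩)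

theorem OrthonormalBasis.repr_apply_eq_zero_of_mem_span_image {ι : Type*} [Fintype ι]
    (b : OrthonormalBasis ι 𝕜 E) {t : Set ι} {y : E} (hy : y ∈ span 𝕜 (b '' t)) {i : ι}
    (hi : i ∉ t) : b.repr y i = 0 := by
  rw [← b.coe_toBasis, Basis.mem_span_image] at hy
  rw [← b.coe_toBasis_repr_apply]
  exact Finsupp.notMem_support_iff.1 fun h => hi (hy h)

end

section
variable {d1 d2 : ℕ}
  (b : OrthonormalBasis (Fin d1 × Fin d2) ℂ (EuclideanSpace ℂ (Fin d1 × Fin d2)))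
  {y : EuclideanSpace ℂ (Fin d1 × Fin d2)}

theorem prodVec_repr_of_mem_span_row {a : Fin d1} (hy : y ∈ span ℂ (b '' {p | p.1 = a})) :
    ProdVec d1 d2 (b.repr y) := by
  refine ⟨fun a' => if a' = a then 1 else 0, fun c => b.repr y (a, c), fun ⟨a', c⟩ => ?_⟩
  by_cases ha : a' = a
  · simp [ha]
  · simp [ha, b.repr_apply_eq_zero_of_mem_span_image hy (i := (a', c)) ha]

theorem prodVec_repr_of_mem_span_col {c : Fin d2} (hy : y ∈ span ℂ (b '' {p | p.2 = c})) :
    ProdVec d1 d2 (b.repr y) := by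
  refine ⟨fun a => b.repr y (a, c), fun c' => if c' = c then 1 else 0, fun ⟨a, c'⟩ => ?_⟩
  by_cases hc : c' = c
  · simp [hc]
  · simp [hc, b.repr_apply_eq_zero_of_mem_span_image hy (i := (a, c')) hc]

end

theorem stmt1_general (d1 d2 N : ℕ) (hd1 : 2 ≤ d1) (hd12 : d1 ≤ d2)
    (ψ : Fin N → EuclideanSpace ℂ (Fin d1 × Fin d2))
    (habs : AbsolutelyEntangled d1 d2 N ψ) :
    ∀ i : Fin N,
      d2 + 1 ≤ Module.finrank ℂ (Submodule.span ℂ (ψ '' {j : Fin N | j ≠ i})) := by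
  intro i
  by_contra! hlt
  obtain ⟨b, a, c, hW, hψ⟩ := exists_orthonormalBasis_le_span_row_mem_span_col (d1 := d1)
    (d2 := d2) (by omega) (by omega) (by simp) (span ℂ (ψ '' {j | j ≠ i})) (by omega) (ψ i)
  obtain ⟨j, hj⟩ := habs b.repr
  by_cases hji : j = i
  · exact hj (hji ▸ prodVec_repr_of_mem_span_col b hψ)
  · exact hj (prodVec_repr_of_mem_span_row b (hW (subset_span ⟨j, hji, rfl⟩)))

theorem stmt1 (d1 d2 N : ℕ) (hd1 : 2 ≤ d1) (hd12 : d1 ≤ d2)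
    (ψ : Fin N → EuclideanSpace ℂ (Fin d1 × Fin d2))
    (hne : ∀ i, ψ i ≠ 0)
    (habs : AbsolutelyEntangled d1 d2 N ψ) :
    ∀ i : Fin N,
      d2 + 1 ≤ Module.finrank ℂ (Submodule.span ℂ (ψ '' {j : Fin N | j ≠ i})) :=
  stmt1_general d1 d2 N hd1 hd12 ψ habs
end
end

section
/- Let d = d1*d2 with d1, d2 ≥ 2, and let ξ_1, ..., ξ_d be an orthonormal basis of C^d. Let a_i, b_i ∈ C for i = 2,...,d with b_i ≠ 0, and suppose there exists λ ∈ (0,1) such that λ|a_i|^2 ≥ |b_i|^2/2 for all i = 2,...,d. Then the set of d vectors {ξ_1} ∪ {a_i ξ_1 + b_i ξ_i : i = 2,...,d} is an absolutely entangled set with respect to the bipartition (d1, d2): for every unitary U on C^d, at least one of the d vectors is mapped by U to a vector that is not a product vector in C^{d1} ⊗ C^{d2}. -/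
/-!
Put `g i = U ξ i` and suppose every `U ψ i` is a product vector; then `g i0 = u ⊗ v` with unit
vectors `u`, `v`. Measure each `g j` by `r j = ∑_q |⟪u ⊗ e_q, g j⟫|² + ∑_x |⟪e_x ⊗ v, g j⟫|²`.
Bessel's inequality for the orthonormal family `g` gives `∑_j r j ≤ d2 + d1`, and `r i0 = 2`.
For `i ≠ i0` write `U ψ i = x ⊗ y = a (u ⊗ v) + b g i`. With `α = ⟪u, x⟫`, `β = ⟪v, y⟫` one finds
`a = α β`, `‖x‖² ‖y‖² = |α β|² + |b|²` and
`|b|² r i = |α|² (‖y‖² - |β|²) + |β|² (‖x‖² - |α|²)`, which by AM–GM exceeds `2/3 |b|²` as soon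
as `|b|² < 3 |a|²`. Summing, `d1 + d2 > 2 + 2/3 (d1 d2 - 1)`, impossible for `d1, d2 ≥ 2`.
-/

noncomputable section

open Finset
open scoped InnerProductSpace

theorem Orthonormal.sum_sum_norm_inner_sq_le_card {𝕜 E ι κ : Type*} [RCLike 𝕜]
    [NormedAddCommGroup E] [InnerProductSpace 𝕜 E] [Fintype ι] [Fintype κ] {g : ι → E}
    (hg : Orthonormal 𝕜 g) {W : κ → E} (hW : ∀ q, ‖W q‖ = 1) :
    ∑ j, ∑ q, ‖⟪W q, g j⟫_𝕜‖ ^ 2 ≤ Fintype.card κ :=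
  calc ∑ j, ∑ q, ‖⟪W q, g j⟫_𝕜‖ ^ 2 = ∑ q, ∑ j, ‖⟪g j, W q⟫_𝕜‖ ^ 2 := by
        rw [sum_comm]; simp_rw [norm_inner_symm]
    _ ≤ ∑ q, ‖W q‖ ^ 2 := sum_le_sum fun q _ => hg.sum_inner_products_le _
    _ = Fintype.card κ := by simp [hW]

theorem norm_sub_inner_smul_sq {𝕜 E : Type*} [RCLike 𝕜] [NormedAddCommGroup E]
    [InnerProductSpace 𝕜 E] {v : E} (hv : ‖v‖ = 1) (y : E) :
    ‖y - ⟪v, y⟫_𝕜 • v‖ ^ 2 = ‖y‖ ^ 2 - ‖⟪v, y⟫_𝕜‖ ^ 2 := by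
  have horth : ⟪y - ⟪v, y⟫_𝕜 • v, ⟪v, y⟫_𝕜 • v⟫_𝕜 = 0 := by
    rw [inner_smul_right, inner_sub_left, inner_smul_left, inner_self_eq_norm_sq_to_K, hv,
      ← inner_conj_symm]
    simp
  have := norm_add_sq_eq_norm_sq_add_norm_sq_of_inner_eq_zero _ _ horth
  rw [sub_add_cancel, norm_smul, hv, mul_one] at this
  linarith

theorem two_mul_lt_three_mul_of_mul_eq_add {A B M N t : ℝ} (hA : 0 ≤ A) (hB : 0 ≤ B)
    (hM : 0 ≤ M) (hN : 0 ≤ N) (hMN : M * N = A * B + t) (ht : 0 < t) (hts : t < 3 * (A * B)) :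
    2 * t < 3 * (A * (N - B) + B * (M - A)) := by
  -- `(A N + B M)² ≥ 4 A N · B M = 4 A B (A B + t) > (2 A B + 2 t / 3)²`
  nlinarith [sq_nonneg (A * N - B * M), mul_nonneg hA hN, mul_nonneg hB hM, mul_pos ht ht]

section TensorVec

variable {ι κ : Type*} [Fintype ι] [Fintype κ]

def tensorVec (x : EuclideanSpace ℂ ι) (y : EuclideanSpace ℂ κ) : EuclideanSpace ℂ (ι × κ) :=
  WithLp.toLp 2 fun p => x p.1 * y p.2

omit [Fintype ι] [Fintype κ] in
@[simp]
theorem tensorVec_apply (x : EuclideanSpace ℂ ι) (y : EuclideanSpace ℂ κ) (p : ι × κ) :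
    tensorVec x y p = x p.1 * y p.2 := rfl

theorem inner_tensorVec (u x : EuclideanSpace ℂ ι) (v y : EuclideanSpace ℂ κ) :
    ⟪tensorVec u v, tensorVec x y⟫_ℂ = ⟪u, x⟫_ℂ * ⟪v, y⟫_ℂ := by
  simp only [PiLp.inner_apply, tensorVec_apply, RCLike.inner_apply, Fintype.sum_prod_type,
    sum_mul_sum, map_mul]
  exact sum_congr rfl fun _ _ => sum_congr rfl fun _ _ => by ring

theorem norm_tensorVec (x : EuclideanSpace ℂ ι) (y : EuclideanSpace ℂ κ) :
    ‖tensorVec x y‖ = ‖x‖ * ‖y‖ := by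
  have h := inner_tensorVec x x y y
  simp only [inner_self_eq_norm_sq_to_K] at h
  norm_cast at h
  rw [← mul_pow] at h
  exact (pow_left_inj₀ (norm_nonneg _) (by positivity) two_ne_zero).mp h

theorem exists_norm_eq_one_tensorVec_eq {x : EuclideanSpace ℂ ι} {y : EuclideanSpace ℂ κ}
    (h : ‖tensorVec x y‖ = 1) :
    ∃ u v, ‖u‖ = 1 ∧ ‖v‖ = 1 ∧ tensorVec x y = tensorVec u v := by
  rw [norm_tensorVec] at h
  have hx : ‖x‖ ≠ 0 := left_ne_zero_of_mul_eq_one h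
  refine ⟨(‖x‖⁻¹ : ℂ) • x, (‖x‖ : ℂ) • y, ?_, ?_, ?_⟩
  · rw [norm_smul, norm_inv, Complex.norm_real, norm_norm, inv_mul_cancel₀ hx]
  · rw [norm_smul, Complex.norm_real, norm_norm, h]
  · ext p
    simp only [tensorVec_apply, PiLp.smul_apply, smul_eq_mul]
    field_simp [Complex.ofReal_ne_zero.mpr hx]

theorem ProdVec.exists_eq_tensorVec {d1 d2 : ℕ} {ψ : EuclideanSpace ℂ (Fin d1 × Fin d2)}
    (h : ProdVec d1 d2 ψ) : ∃ x y, ψ = tensorVec x y := by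
  obtain ⟨u, v, huv⟩ := h
  exact ⟨WithLp.toLp 2 u, WithLp.toLp 2 v, by ext p; simp [huv]⟩

def partialInnerLeft [DecidableEq κ] (u : EuclideanSpace ℂ ι) :
    EuclideanSpace ℂ (ι × κ) →ₗ[ℂ] EuclideanSpace ℂ κ where
  toFun φ := WithLp.toLp 2 fun q => ⟪tensorVec u (EuclideanSpace.single q 1), φ⟫_ℂ
  map_add' _ _ := by ext; simp
  map_smul' _ _ := by ext; simp

def partialInnerRight [DecidableEq ι] (v : EuclideanSpace ℂ κ) :
    EuclideanSpace ℂ (ι × κ) →ₗ[ℂ] EuclideanSpace ℂ ι where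
  toFun φ := WithLp.toLp 2 fun x => ⟪tensorVec (EuclideanSpace.single x 1) v, φ⟫_ℂ
  map_add' _ _ := by ext; simp
  map_smul' _ _ := by ext; simp

theorem partialInnerLeft_tensorVec [DecidableEq κ] (u x : EuclideanSpace ℂ ι)
    (y : EuclideanSpace ℂ κ) :
    partialInnerLeft u (tensorVec x y) = ⟪u, x⟫_ℂ • y := by
  ext q
  simp [partialInnerLeft, inner_tensorVec, EuclideanSpace.inner_single_left]

theorem partialInnerRight_tensorVec [DecidableEq ι] (v y : EuclideanSpace ℂ κ)
    (x : EuclideanSpace ℂ ι) :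
    partialInnerRight v (tensorVec x y) = ⟪v, y⟫_ℂ • x := by
  ext p
  simp [partialInnerRight, inner_tensorVec, EuclideanSpace.inner_single_left, mul_comm]

theorem Orthonormal.sum_norm_partialInnerLeft_sq_le [DecidableEq κ] {n : Type*} [Fintype n]
    {g : n → EuclideanSpace ℂ (ι × κ)} (hg : Orthonormal ℂ g) {u : EuclideanSpace ℂ ι}
    (hu : ‖u‖ = 1) : ∑ j, ‖partialInnerLeft u (g j)‖ ^ 2 ≤ Fintype.card κ := by
  simp_rw [EuclideanSpace.norm_sq_eq]
  exact hg.sum_sum_norm_inner_sq_le_card fun q => by simp [norm_tensorVec, hu]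

theorem Orthonormal.sum_norm_partialInnerRight_sq_le [DecidableEq ι] {n : Type*} [Fintype n]
    {g : n → EuclideanSpace ℂ (ι × κ)} (hg : Orthonormal ℂ g) {v : EuclideanSpace ℂ κ}
    (hv : ‖v‖ = 1) : ∑ j, ‖partialInnerRight v (g j)‖ ^ 2 ≤ Fintype.card ι := by
  simp_rw [EuclideanSpace.norm_sq_eq]
  exact hg.sum_sum_norm_inner_sq_le_card fun x => by simp [norm_tensorVec, hv]

theorem norm_partialInnerLeft_sq [DecidableEq κ] {u x : EuclideanSpace ℂ ι}
    {v y : EuclideanSpace ℂ κ} {φ : EuclideanSpace ℂ (ι × κ)} {b : ℂ} (hu : ‖u‖ = 1)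
    (hv : ‖v‖ = 1) (h : tensorVec x y = (⟪u, x⟫_ℂ * ⟪v, y⟫_ℂ) • tensorVec u v + b • φ) :
    ‖b‖ ^ 2 * ‖partialInnerLeft u φ‖ ^ 2 = ‖⟪u, x⟫_ℂ‖ ^ 2 * (‖y‖ ^ 2 - ‖⟪v, y⟫_ℂ‖ ^ 2) := by
  have hbφ : b • partialInnerLeft u φ = ⟪u, x⟫_ℂ • (y - ⟪v, y⟫_ℂ • v) := by
    rw [← map_smul, eq_sub_of_add_eq' h.symm, map_sub, map_smul, partialInnerLeft_tensorVec,
      partialInnerLeft_tensorVec, inner_self_eq_norm_sq_to_K, hu, smul_sub, smul_smul, smul_smul]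
    simp
  rw [← norm_sub_inner_smul_sq hv, ← mul_pow, ← mul_pow, ← norm_smul, ← norm_smul, hbφ]

theorem norm_partialInnerRight_sq [DecidableEq ι] {u x : EuclideanSpace ℂ ι}
    {v y : EuclideanSpace ℂ κ} {φ : EuclideanSpace ℂ (ι × κ)} {b : ℂ} (hu : ‖u‖ = 1)
    (hv : ‖v‖ = 1) (h : tensorVec x y = (⟪u, x⟫_ℂ * ⟪v, y⟫_ℂ) • tensorVec u v + b • φ) :
    ‖b‖ ^ 2 * ‖partialInnerRight v φ‖ ^ 2 = ‖⟪v, y⟫_ℂ‖ ^ 2 * (‖x‖ ^ 2 - ‖⟪u, x⟫_ℂ‖ ^ 2) := by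
  have hbφ : b • partialInnerRight v φ = ⟪v, y⟫_ℂ • (x - ⟪u, x⟫_ℂ • u) := by
    rw [← map_smul, eq_sub_of_add_eq' h.symm, map_sub, map_smul, partialInnerRight_tensorVec,
      partialInnerRight_tensorVec, inner_self_eq_norm_sq_to_K, hv, smul_sub, smul_smul, smul_smul]
    simp [mul_comm]
  rw [← norm_sub_inner_smul_sq hu, ← mul_pow, ← mul_pow, ← norm_smul, ← norm_smul, hbφ]

theorem norm_partialInner_tensorVec_self_sq [DecidableEq ι] [DecidableEq κ]
    {u : EuclideanSpace ℂ ι} {v : EuclideanSpace ℂ κ} (hu : ‖u‖ = 1) (hv : ‖v‖ = 1) :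
    ‖partialInnerLeft u (tensorVec u v)‖ ^ 2 + ‖partialInnerRight v (tensorVec u v)‖ ^ 2 = 2 := by
  simp [partialInnerLeft_tensorVec, partialInnerRight_tensorVec, inner_self_eq_norm_sq_to_K, hu,
    hv]
  norm_num

theorem two_thirds_lt_norm_partialInner_sq [DecidableEq ι] [DecidableEq κ]
    {u x : EuclideanSpace ℂ ι} {v y : EuclideanSpace ℂ κ} {φ : EuclideanSpace ℂ (ι × κ)}
    {a b : ℂ} (hu : ‖u‖ = 1) (hv : ‖v‖ = 1) (hφ : ‖φ‖ = 1) (horth : ⟪tensorVec u v, φ⟫_ℂ = 0)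
    (h : tensorVec x y = a • tensorVec u v + b • φ) (hb : b ≠ 0) (hab : ‖b‖ ^ 2 < 3 * ‖a‖ ^ 2) :
    2 / 3 < ‖partialInnerLeft u φ‖ ^ 2 + ‖partialInnerRight v φ‖ ^ 2 := by
  have huv : ‖tensorVec u v‖ = 1 := by rw [norm_tensorVec, hu, hv, one_mul]
  have ha : a = ⟪u, x⟫_ℂ * ⟪v, y⟫_ℂ := by
    have := congrArg (⟪tensorVec u v, ·⟫_ℂ) h
    simpa [inner_tensorVec, inner_add_right, inner_smul_right, horth,
      inner_self_eq_norm_sq_to_K, huv] using this.symm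
  have hxy : ‖x‖ ^ 2 * ‖y‖ ^ 2 = ‖a‖ ^ 2 + ‖b‖ ^ 2 := by
    rw [← mul_pow, ← norm_tensorVec, h, norm_add_sq (𝕜 := ℂ), inner_smul_left, inner_smul_right,
      horth]
    simp [norm_smul, huv, hφ]
  have hL := norm_partialInnerLeft_sq (φ := φ) hu hv (ha ▸ h)
  have hR := norm_partialInnerRight_sq (φ := φ) hu hv (ha ▸ h)
  rw [ha, norm_mul, mul_pow] at hxy hab
  have hb2 : 0 < ‖b‖ ^ 2 := by positivity
  have key := two_mul_lt_three_mul_of_mul_eq_add (by positivity) (by positivity) (by positivity)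
    (by positivity) hxy hb2 hab
  nlinarith

end TensorVec

theorem add_lt_sum_of_two_thirds_lt {d1 d2 : ℕ} (hd1 : 2 ≤ d1) (hd2 : 2 ≤ d2)
    {r : Fin (d1 * d2) → ℝ} {i0 : Fin (d1 * d2)} (h0 : r i0 = 2) (h : ∀ i ≠ i0, 2 / 3 < r i) :
    (d2 + d1 : ℝ) < ∑ i, r i := by
  have hcard : #(univ.erase i0) = d1 * d2 - 1 := by
    rw [card_erase_of_mem (mem_univ i0), card_univ, Fintype.card_fin]
  have hd : 4 ≤ d1 * d2 := Nat.mul_le_mul hd1 hd2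
  have hne : (univ.erase i0).Nonempty := card_pos.mp (by omega)
  have hlow := sum_lt_sum_of_nonempty hne fun i hi => h i (ne_of_mem_erase hi)
  rw [sum_const, hcard, nsmul_eq_mul, Nat.cast_sub (by omega), Nat.cast_mul] at hlow
  rw [← add_sum_erase _ _ (mem_univ i0), h0]
  have : (2 : ℝ) ≤ d1 := by exact_mod_cast hd1
  have : (2 : ℝ) ≤ d2 := by exact_mod_cast hd2
  nlinarith

theorem stmt3_general (d1 d2 : ℕ) (hd1 : 2 ≤ d1) (hd2 : 2 ≤ d2)
    (ξ : Fin (d1 * d2) → EuclideanSpace ℂ (Fin d1 × Fin d2))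
    (hON : Orthonormal ℂ ξ)
    (a b : Fin (d1 * d2) → ℂ) (lam : ℝ) (hlam1 : lam < 1)
    (i0 : Fin (d1 * d2))
    (hb : ∀ i, i ≠ i0 → b i ≠ 0)
    (hab : ∀ i, i ≠ i0 → ‖b i‖ ^ 2 / 2 ≤ lam * ‖a i‖ ^ 2)
    (ψ : Fin (d1 * d2) → EuclideanSpace ℂ (Fin d1 × Fin d2))
    (hψ0 : ψ i0 = ξ i0)
    (hψ : ∀ i, i ≠ i0 → ψ i = a i • ξ i0 + b i • ξ i) :
    ∀ U : EuclideanSpace ℂ (Fin d1 × Fin d2) ≃ₗᵢ[ℂ] EuclideanSpace ℂ (Fin d1 × Fin d2),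
      ∃ i : Fin (d1 * d2), ¬ ProdVec d1 d2 (U (ψ i)) := by
  intro U
  by_contra! hprod
  set g := fun i => U (ξ i)
  have hg : Orthonormal ℂ g := hON.comp_linearIsometryEquiv U
  obtain ⟨u, v, hu, hv, hg0⟩ : ∃ u v, ‖u‖ = 1 ∧ ‖v‖ = 1 ∧ g i0 = tensorVec u v := by
    obtain ⟨x, y, hxy⟩ := (hprod i0).exists_eq_tensorVec
    rw [hψ0] at hxy
    obtain ⟨u, v, hu, hv, huv⟩ := exists_norm_eq_one_tensorVec_eq
      (by rw [← hxy]; exact hg.1 i0)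
    exact ⟨u, v, hu, hv, hxy.trans huv⟩
  have hr : ∀ i ≠ i0, 2 / 3 < ‖partialInnerLeft u (g i)‖ ^ 2 + ‖partialInnerRight v (g i)‖ ^ 2 := by
    intro i hi
    obtain ⟨x, y, hxy⟩ := (hprod i).exists_eq_tensorVec
    have hdecomp : tensorVec x y = a i • tensorVec u v + b i • g i := by
      rw [← hxy, hψ i hi, map_add, map_smul, map_smul, ← hg0]
    have hba : ‖b i‖ ^ 2 < 3 * ‖a i‖ ^ 2 := by
      have := hab i hi
      have : 0 < ‖b i‖ ^ 2 := by have := hb i hi; positivity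
      nlinarith
    exact two_thirds_lt_norm_partialInner_sq hu hv (hg.1 i) (hg0 ▸ hg.2 hi.symm) hdecomp
      (hb i hi) hba
  have hsum := add_lt_sum_of_two_thirds_lt hd1 hd2
    (hg0 ▸ norm_partialInner_tensorVec_self_sq hu hv) hr
  have hL := hg.sum_norm_partialInnerLeft_sq_le hu
  have hR := hg.sum_norm_partialInnerRight_sq_le hv
  rw [Fintype.card_fin] at hL hR
  rw [sum_add_distrib] at hsum
  linarith

theorem stmt3 (d1 d2 : ℕ) (hd1 : 2 ≤ d1) (hd2 : 2 ≤ d2)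
    (ξ : Fin (d1 * d2) → EuclideanSpace ℂ (Fin d1 × Fin d2))
    (hON : Orthonormal ℂ ξ)
    (a b : Fin (d1 * d2) → ℂ) (lam : ℝ) (hlam0 : 0 < lam) (hlam1 : lam < 1)
    (i0 : Fin (d1 * d2)) (hi0 : (i0 : ℕ) = 0)
    (hb : ∀ i, i ≠ i0 → b i ≠ 0)
    (hab : ∀ i, i ≠ i0 → ‖b i‖ ^ 2 / 2 ≤ lam * ‖a i‖ ^ 2)
    (ψ : Fin (d1 * d2) → EuclideanSpace ℂ (Fin d1 × Fin d2))
    (hψ0 : ψ i0 = ξ i0)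
    (hψ : ∀ i, i ≠ i0 → ψ i = a i • ξ i0 + b i • ξ i) :
    ∀ U : EuclideanSpace ℂ (Fin d1 × Fin d2) ≃ₗᵢ[ℂ] EuclideanSpace ℂ (Fin d1 × Fin d2),
      ∃ i : Fin (d1 * d2), ¬ ProdVec d1 d2 (U (ψ i)) :=
  stmt3_general d1 d2 hd1 hd2 ξ hON a b lam hlam1 i0 hb hab ψ hψ0 hψ
end
end

section
/- Let d ≥ 4, λ ∈ (0,1), and let a_i, b_i ∈ C for i = 2,...,d satisfy λ|a_i|^2 ≥ |b_i|^2/2. Suppose u^{(i)}_{12}, u^{(i)}_{21}, u^{(i)}_{22} ∈ C for i = 2,...,d satisfy: (1) for each i, a_i·u^{(i)}_{22} = b_i·u^{(i)}_{12}·u^{(i)}_{21}; (2) Σ_{i=2}^d |u^{(i)}_{22}|^2 = 1; (3) Σ_{i=2}^d |u^{(i)}_{12}|^2 ≤ 1 and Σ_{i=2}^d |u^{(i)}_{21}|^2 ≤ 1; (4) |u^{(i)}_{12}|^2 + |u^{(i)}_{21}|^2 ≤ 1 for each i. Then a contradiction follows, i.e., no such family exists. -/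
open Finset

/- From `a z = b x y` and `‖b‖² ≤ 2λ‖a‖²` one gets `‖z‖² ≤ 2λ ‖x‖²‖y‖²`, and AM-GM together with
`‖x‖² + ‖y‖² ≤ 1` bounds this by `λ (‖x‖² + ‖y‖²) / 2`. Summing over `i` and using that the
`u₁₂` and `u₂₁` columns have total mass at most one each gives `1 ≤ λ < 1`. -/

lemma mul_le_add_div_four_of_add_le_one {p q : ℝ} (hp : 0 ≤ p) (hq : 0 ≤ q) (h : p + q ≤ 1) :
    p * q ≤ (p + q) / 4 := by
  nlinarith [sq_nonneg (p - q)]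

lemma norm_sq_le_of_mul_eq_mul_mul {𝕜 : Type*} [NormedDivisionRing 𝕜] {lam : ℝ} {a b x y z : 𝕜}
    (hb : b ≠ 0) (hab : ‖b‖ ^ 2 / 2 ≤ lam * ‖a‖ ^ 2) (h : a * z = b * x * y)
    (hxy : ‖x‖ ^ 2 + ‖y‖ ^ 2 ≤ 1) :
    ‖z‖ ^ 2 ≤ lam / 2 * (‖x‖ ^ 2 + ‖y‖ ^ 2) := by
  have hlam_a : 0 < lam * ‖a‖ ^ 2 := by
    have : 0 < ‖b‖ := norm_pos_iff.mpr hb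
    exact lt_of_lt_of_le (by positivity) hab
  have hlam : 0 < lam := pos_of_mul_pos_left hlam_a (by positivity)
  have ha : 0 < ‖a‖ ^ 2 := pos_of_mul_pos_right hlam_a hlam.le
  have hnorm : ‖a‖ ^ 2 * ‖z‖ ^ 2 = ‖b‖ ^ 2 * (‖x‖ ^ 2 * ‖y‖ ^ 2) := by
    rw [← mul_pow, ← norm_mul, h, norm_mul, norm_mul]
    ring
  have hz : ‖z‖ ^ 2 ≤ 2 * lam * (‖x‖ ^ 2 * ‖y‖ ^ 2) := by
    refine le_of_mul_le_mul_left ?_ ha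
    calc ‖a‖ ^ 2 * ‖z‖ ^ 2 = ‖b‖ ^ 2 * (‖x‖ ^ 2 * ‖y‖ ^ 2) := hnorm
      _ ≤ 2 * lam * ‖a‖ ^ 2 * (‖x‖ ^ 2 * ‖y‖ ^ 2) := by gcongr; linarith
      _ = ‖a‖ ^ 2 * (2 * lam * (‖x‖ ^ 2 * ‖y‖ ^ 2)) := by ring
  calc ‖z‖ ^ 2 ≤ 2 * lam * (‖x‖ ^ 2 * ‖y‖ ^ 2) := hz
    _ ≤ 2 * lam * ((‖x‖ ^ 2 + ‖y‖ ^ 2) / 4) := by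
      gcongr
      exact mul_le_add_div_four_of_add_le_one (by positivity) (by positivity) hxy
    _ = lam / 2 * (‖x‖ ^ 2 + ‖y‖ ^ 2) := by ring

/-- The index type `Fin (d - 1)` stands for the indices `i = 2, …, d`. -/
theorem stmt5_general (d : ℕ) (lam : ℝ) (hlam0 : 0 < lam) (hlam1 : lam < 1)
    (a b u12 u21 u22 : Fin (d - 1) → ℂ)
    (hb : ∀ i, b i ≠ 0)
    (hab : ∀ i, ‖b i‖ ^ 2 / 2 ≤ lam * ‖a i‖ ^ 2)
    (h1 : ∀ i, a i * u22 i = b i * u12 i * u21 i)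
    (h2 : ∑ i : Fin (d - 1), ‖u22 i‖ ^ 2 = 1)
    (h3 : ∑ i : Fin (d - 1), ‖u12 i‖ ^ 2 ≤ 1)
    (h3' : ∑ i : Fin (d - 1), ‖u21 i‖ ^ 2 ≤ 1)
    (h4 : ∀ i, ‖u12 i‖ ^ 2 + ‖u21 i‖ ^ 2 ≤ 1) :
    False := by
  have h : (1 : ℝ) ≤ lam := calc
    1 = ∑ i, ‖u22 i‖ ^ 2 := h2.symm
    _ ≤ ∑ i, lam / 2 * (‖u12 i‖ ^ 2 + ‖u21 i‖ ^ 2) :=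
      sum_le_sum fun i _ => norm_sq_le_of_mul_eq_mul_mul (hb i) (hab i) (h1 i) (h4 i)
    _ = lam / 2 * (∑ i, ‖u12 i‖ ^ 2 + ∑ i, ‖u21 i‖ ^ 2) := by
      rw [← sum_add_distrib, mul_sum]
    _ ≤ lam / 2 * (1 + 1) := by gcongr
    _ = lam := by ring
  exact hlam1.not_ge h

/-- The core numerical contradiction: the index type `Fin (d-1)` stands for the indices
`i = 2, …, d` (with `d ≥ 4`, so there are `d - 1 ≥ 3` of them). -/
theorem stmt5 (d : ℕ) (hd : 4 ≤ d) (lam : ℝ) (hlam0 : 0 < lam) (hlam1 : lam < 1)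
    (a b u12 u21 u22 : Fin (d - 1) → ℂ)
    (hb : ∀ i, b i ≠ 0)
    (hab : ∀ i, ‖b i‖ ^ 2 / 2 ≤ lam * ‖a i‖ ^ 2)
    (h1 : ∀ i, a i * u22 i = b i * u12 i * u21 i)
    (h2 : ∑ i : Fin (d - 1), ‖u22 i‖ ^ 2 = 1)
    (h3 : ∑ i : Fin (d - 1), ‖u12 i‖ ^ 2 ≤ 1)
    (h3' : ∑ i : Fin (d - 1), ‖u21 i‖ ^ 2 ≤ 1)
    (h4 : ∀ i, ‖u12 i‖ ^ 2 + ‖u21 i‖ ^ 2 ≤ 1) :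
    False :=
  stmt5_general d lam hlam0 hlam1 a b u12 u21 u22 hb hab h1 h2 h3 h3' h4
end

section
/- In C^2 ⊗ C^2, any set of three mutually orthonormal product vectors can be extended by exactly one more unit vector (unique up to global phase) to an orthonormal basis, and this fourth vector is necessarily also a product vector. -/
noncomputable section

/-!
Write `ψ i = u i ⊗ v i`. Since `⟪u ⊗ v, a ⊗ b⟫ = ⟪u, a⟫ * ⟪v, b⟫`, every pair `i ≠ j` is orthogonal
in the first or in the second factor. Colouring the three edges of a triangle accordingly, two edges
of the same colour meet at a vertex `k`, say with `u i ⊥ u k` for both `i ≠ k`; then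
`u k ⊗ w` with `w ⊥ v k` is orthogonal to all three `ψ i`. It is unique up to a phase because the
orthogonal complement of three orthonormal vectors in `ℂ⁴` is a line.
-/

open Module Submodule
open scoped InnerProductSpace

theorem exists_norm_eq_one_smul_of_finrank_eq_one {𝕜 V : Type*} [NormedField 𝕜]
    [NormedAddCommGroup V] [NormedSpace 𝕜 V] (hV : finrank 𝕜 V = 1) {x y : V}
    (hx : ‖x‖ = 1) (hy : ‖y‖ = 1) : ∃ c : 𝕜, ‖c‖ = 1 ∧ y = c • x := by
  have hx0 : x ≠ 0 := norm_ne_zero_iff.mp (by rw [hx]; exact one_ne_zero)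
  obtain ⟨c, rfl⟩ := (finrank_eq_one_iff_of_nonzero' x hx0).mp hV y
  refine ⟨c, ?_, rfl⟩
  rwa [norm_smul, hx, mul_one] at hy

section InnerProductSpace

variable {𝕜 E : Type*} [RCLike 𝕜] [NormedAddCommGroup E] [InnerProductSpace 𝕜 E]

theorem mem_orthogonal_span_range {ι : Type*} {ψ : ι → E} {φ : E}
    (h : ∀ i, ⟪ψ i, φ⟫_𝕜 = 0) : φ ∈ (span 𝕜 (Set.range ψ))ᗮ := by
  have : span 𝕜 (Set.range ψ) ⟂ span 𝕜 {φ} :=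
    isOrtho_span.mpr (by rintro _ ⟨i, rfl⟩ _ rfl; exact h i)
  exact isOrtho_iff_le.mp (isOrtho_comm.mp this) (mem_span_singleton_self φ)

theorem finrank_orthogonal_span_range_eq_one [FiniteDimensional 𝕜 E] {ι : Type*} [Fintype ι]
    {ψ : ι → E} (hψ : LinearIndependent 𝕜 ψ) (hdim : finrank 𝕜 E = Fintype.card ι + 1) :
    finrank 𝕜 (span 𝕜 (Set.range ψ))ᗮ = 1 :=
  finrank_add_finrank_orthogonal' (by rw [finrank_span_eq_card hψ, hdim])

theorem exists_norm_eq_one_smul_of_inner_eq_zero [FiniteDimensional 𝕜 E] {ι : Type*}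
    [Fintype ι] {ψ : ι → E} (hψ : LinearIndependent 𝕜 ψ)
    (hdim : finrank 𝕜 E = Fintype.card ι + 1) {φ φ' : E} (hφ : ‖φ‖ = 1) (hφ' : ‖φ'‖ = 1)
    (horth : ∀ i, ⟪ψ i, φ⟫_𝕜 = 0) (horth' : ∀ i, ⟪ψ i, φ'⟫_𝕜 = 0) :
    ∃ c : 𝕜, ‖c‖ = 1 ∧ φ' = c • φ := by
  obtain ⟨c, hc, h⟩ := exists_norm_eq_one_smul_of_finrank_eq_one
    (finrank_orthogonal_span_range_eq_one hψ hdim)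
    (x := ⟨φ, mem_orthogonal_span_range horth⟩) (y := ⟨φ', mem_orthogonal_span_range horth'⟩)
    hφ hφ'
  exact ⟨c, hc, congrArg Subtype.val h⟩

theorem exists_ne_zero_inner_eq_zero [FiniteDimensional 𝕜 E] (hE : 2 ≤ finrank 𝕜 E) (v : E) :
    ∃ w ≠ 0, ⟪v, w⟫_𝕜 = 0 := by
  have hle : finrank 𝕜 (𝕜 ∙ v) ≤ 1 := by simpa using finrank_span_le_card ({v} : Set E)
  have hpos : 0 < finrank 𝕜 (𝕜 ∙ v)ᗮ := by
    have := finrank_add_finrank_orthogonal (𝕜 ∙ v); omega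
  obtain ⟨⟨w, hw⟩, hw0⟩ := finrank_pos_iff_exists_ne_zero.mp hpos
  exact ⟨w, fun h => hw0 (Subtype.ext h), mem_orthogonal_singleton_iff_inner_right.mp hw⟩

theorem exists_inner_mul_inner_eq_zero {F ι : Type*} [NormedAddCommGroup F]
    [InnerProductSpace 𝕜 F] [FiniteDimensional 𝕜 F] (hF : 2 ≤ finrank 𝕜 F)
    (x : ι → E) (y : ι → F) {k : ι} (hxk : x k ≠ 0) (hk : ∀ i ≠ k, ⟪x i, x k⟫_𝕜 = 0) :
    ∃ a ≠ 0, ∃ b ≠ 0, ∀ i, ⟪x i, a⟫_𝕜 * ⟪y i, b⟫_𝕜 = 0 := by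
  obtain ⟨b, hb, hyb⟩ := exists_ne_zero_inner_eq_zero hF (y k)
  refine ⟨x k, hxk, b, hb, fun i => ?_⟩
  rcases eq_or_ne i k with rfl | hi
  · rw [hyb, mul_zero]
  · rw [hk i hi, zero_mul]

end InnerProductSpace

theorem exists_monochromatic_vertex_fin_three {R S : Fin 3 → Fin 3 → Prop}
    (hR : ∀ i j, R i j → R j i) (hS : ∀ i j, S i j → S j i)
    (h : ∀ i j, i ≠ j → R i j ∨ S i j) :
    ∃ k, (∀ i ≠ k, R i k) ∨ (∀ i ≠ k, S i k) := by
  have star {P : Fin 3 → Fin 3 → Prop} {k i j : Fin 3} (hk : ∀ l ≠ k, l = i ∨ l = j)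
      (hi : P i k) (hj : P j k) : ∀ l ≠ k, P l k := by
    intro l hl
    rcases hk l hl with rfl | rfl <;> assumption
  rcases h 0 1 (by decide) with h01 | h01 <;> rcases h 0 2 (by decide) with h02 | h02
  · exact ⟨0, .inl (star (by decide) (hR _ _ h01) (hR _ _ h02))⟩
  · rcases h 1 2 (by decide) with h12 | h12
    · exact ⟨1, .inl (star (by decide) h01 (hR _ _ h12))⟩
    · exact ⟨2, .inr (star (by decide) h02 h12)⟩
  · rcases h 1 2 (by decide) with h12 | h12
    · exact ⟨2, .inl (star (by decide) h02 h12)⟩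
    · exact ⟨1, .inr (star (by decide) h01 (hS _ _ h12))⟩
  · exact ⟨0, .inr (star (by decide) (hS _ _ h01) (hS _ _ h02))⟩

namespace EuclideanSpace

variable {α β : Type*}

def tensor (u : EuclideanSpace ℂ α) (v : EuclideanSpace ℂ β) : EuclideanSpace ℂ (α × β) :=
  WithLp.toLp 2 fun p => u p.1 * v p.2

@[simp]
theorem tensor_apply (u : EuclideanSpace ℂ α) (v : EuclideanSpace ℂ β) (p : α × β) :
    tensor u v p = u p.1 * v p.2 := rfl

theorem tensor_smul_left (c : ℂ) (u : EuclideanSpace ℂ α) (v : EuclideanSpace ℂ β) :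
    tensor (c • u) v = c • tensor u v := by
  ext p; simp [mul_assoc]

variable [Fintype α] [Fintype β]

theorem inner_tensor (u a : EuclideanSpace ℂ α) (v b : EuclideanSpace ℂ β) :
    ⟪tensor u v, tensor a b⟫_ℂ = ⟪u, a⟫_ℂ * ⟪v, b⟫_ℂ := by
  simp only [PiLp.inner_apply, tensor_apply, Fintype.sum_prod_type, Finset.sum_mul_sum]
  refine Finset.sum_congr rfl fun i _ => Finset.sum_congr rfl fun j _ => ?_
  simp only [RCLike.inner_apply, map_mul]
  ring

theorem norm_tensor (u : EuclideanSpace ℂ α) (v : EuclideanSpace ℂ β) :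
    ‖tensor u v‖ = ‖u‖ * ‖v‖ := by
  have h := inner_tensor u u v v
  simp only [inner_self_eq_norm_sq_to_K] at h
  norm_cast at h
  rw [← mul_pow] at h
  exact (pow_left_inj₀ (norm_nonneg _) (by positivity) two_ne_zero).mp h

end EuclideanSpace

open EuclideanSpace

theorem prodVec_iff_exists_eq_tensor {d1 d2 : ℕ} {ψ : EuclideanSpace ℂ (Fin d1 × Fin d2)} :
    ProdVec d1 d2 ψ ↔ ∃ u v, ψ = tensor u v := by
  constructor
  · rintro ⟨u, v, huv⟩
    exact ⟨WithLp.toLp 2 u, WithLp.toLp 2 v, PiLp.ext huv⟩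
  · rintro ⟨u, v, rfl⟩
    exact ⟨u, v, fun _ => rfl⟩

theorem stmt6 (ψ : Fin 3 → EuclideanSpace ℂ (Fin 2 × Fin 2))
    (hON : Orthonormal ℂ ψ)
    (hprod : ∀ i, ProdVec 2 2 (ψ i)) :
    ∃ φ : EuclideanSpace ℂ (Fin 2 × Fin 2),
      ‖φ‖ = 1 ∧ (∀ i, inner ℂ (ψ i) φ = (0 : ℂ)) ∧ ProdVec 2 2 φ ∧
      ∀ φ' : EuclideanSpace ℂ (Fin 2 × Fin 2),
        ‖φ'‖ = 1 → (∀ i, inner ℂ (ψ i) φ' = (0 : ℂ)) →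
          ∃ c : ℂ, ‖c‖ = 1 ∧ φ' = c • φ := by
  choose u v hψ using fun i => prodVec_iff_exists_eq_tensor.mp (hprod i)
  have hu i : u i ≠ 0 := by rintro h; simpa [hψ, norm_tensor, h] using hON.1 i
  have hv i : v i ≠ 0 := by rintro h; simpa [hψ, norm_tensor, h] using hON.1 i
  have hpair i j (hij : i ≠ j) : ⟪u i, u j⟫_ℂ = 0 ∨ ⟪v i, v j⟫_ℂ = 0 :=
    mul_eq_zero.mp (by rw [← inner_tensor, ← hψ, ← hψ]; exact hON.2 hij)
  have h2 : 2 ≤ finrank ℂ (EuclideanSpace ℂ (Fin 2)) := by simp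
  obtain ⟨a, ha, b, hb, hab⟩ : ∃ a ≠ 0, ∃ b ≠ 0, ∀ i, ⟪u i, a⟫_ℂ * ⟪v i, b⟫_ℂ = 0 := by
    obtain ⟨k, hk | hk⟩ := exists_monochromatic_vertex_fin_three
      (fun _ _ => inner_eq_zero_symm.mp) (fun _ _ => inner_eq_zero_symm.mp) hpair
    · exact exists_inner_mul_inner_eq_zero h2 u v (hu k) hk
    · obtain ⟨b, hb, a, ha, hba⟩ := exists_inner_mul_inner_eq_zero h2 v u (hv k) hk
      exact ⟨a, ha, b, hb, fun i => by rw [mul_comm, hba]⟩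
  have hab0 : tensor a b ≠ 0 := by
    rw [← norm_ne_zero_iff, norm_tensor]
    exact mul_ne_zero (norm_ne_zero_iff.mpr ha) (norm_ne_zero_iff.mpr hb)
  set c : ℂ := (‖tensor a b‖⁻¹ : ℂ)
  have horth i : ⟪ψ i, tensor (c • a) b⟫_ℂ = 0 := by
    rw [hψ, inner_tensor, inner_smul_right, mul_assoc, hab, mul_zero]
  have hnorm : ‖tensor (c • a) b‖ = 1 := by
    rw [tensor_smul_left]; exact norm_smul_inv_norm hab0
  exact ⟨tensor (c • a) b, hnorm, horth, prodVec_iff_exists_eq_tensor.mpr ⟨_, _, rfl⟩,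
    fun _ hφ' horth' => exists_norm_eq_one_smul_of_inner_eq_zero hON.linearIndependent (by simp)
      hnorm hφ' horth horth'⟩
end
end

section
/- Every orthonormal product basis of C^2 ⊗ C^2 has (up to swapping the two tensor factors and reordering) the form {α⊗β, α^⊥⊗γ, α⊗β^⊥, α^⊥⊗γ^⊥}, where {α, α^⊥} is an orthonormal basis of the first C^2 and {β, β^⊥}, {γ, γ^⊥} are orthonormal bases of the second C^2. -/
/-!
Write each basis vector as `a m ⊗ b m` with unit factors; orthogonality of two of them means
`⟪a m, a n⟫ = 0` or `⟪b m, b n⟫ = 0`. Among the three vectors other than the first, two are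
orthogonal to it in the same factor, say `a 1, a 3 ⊥ a 0`. In dimension two this forces
`a 3 ∥ a 1`, hence `b 1 ⊥ b 3`; then `a 2` must be orthogonal to `a 1` (otherwise `b 2` would be
orthogonal to both `b 1` and `b 3`), so `a 2 ∥ a 0` and `b 0 ⊥ b 2`.
-/

open scoped InnerProductSpace
open Module

noncomputable section

section TwoDimensional

variable {𝕜 E F : Type*} [RCLike 𝕜]
  [NormedAddCommGroup E] [InnerProductSpace 𝕜 E] [Fact (finrank 𝕜 E = 2)]
  [NormedAddCommGroup F] [InnerProductSpace 𝕜 F] [Fact (finrank 𝕜 F = 2)]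

theorem exists_norm_eq_one_smul_eq_of_inner_eq_zero {u v w : E} (hu : ‖u‖ = 1) (hw : ‖w‖ = 1)
    (hv : v ≠ 0) (huv : ⟪v, u⟫_𝕜 = 0) (hwv : ⟪v, w⟫_𝕜 = 0) : ∃ t : 𝕜, ‖t‖ = 1 ∧ u = t • w := by
  have hw0 : w ≠ 0 := norm_ne_zero_iff.mp (by simp [hw])
  obtain ⟨t, rfl⟩ := Submodule.mem_span_singleton.mp
    (Submodule.mem_span_singleton_of_inner_eq_zero_of_inner_eq_zero hv hw0 huv hwv)
  exact ⟨t, by simpa [norm_smul, hw] using hu, rfl⟩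

theorem eq_zero_of_inner_eq_zero_of_inner_eq_zero {u v w : E} (hv : v ≠ 0) (hw : w ≠ 0)
    (hvw : ⟪v, w⟫_𝕜 = 0) (huv : ⟪v, u⟫_𝕜 = 0) (huw : ⟪w, u⟫_𝕜 = 0) : u = 0 := by
  obtain ⟨t, rfl⟩ := Submodule.mem_span_singleton.mp
    (Submodule.mem_span_singleton_of_inner_eq_zero_of_inner_eq_zero hv hw huv hvw)
  simp_all [inner_smul_right]

theorem exists_orthonormal_of_pairwise_inner_eq_zero_or {a : Fin 4 → E} {b : Fin 4 → F}
    (ha : ∀ m, ‖a m‖ = 1) (hb : ∀ m, ‖b m‖ = 1)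
    (horth : Pairwise fun m n => ⟪a m, a n⟫_𝕜 = 0 ∨ ⟪b m, b n⟫_𝕜 = 0)
    (h01 : ⟪a 0, a 1⟫_𝕜 = 0) (h03 : ⟪a 0, a 3⟫_𝕜 = 0) :
    ∃ s t : 𝕜, a 2 = s • a 0 ∧ a 3 = t • a 1 ∧ Orthonormal 𝕜 ![a 0, a 1] ∧
      Orthonormal 𝕜 ![b 0, s • b 2] ∧ Orthonormal 𝕜 ![b 1, t • b 3] := by
  have ha0 (m) : a m ≠ 0 := norm_ne_zero_iff.mp (by simp [ha m])
  have hb0 (m) : b m ≠ 0 := norm_ne_zero_iff.mp (by simp [hb m])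
  obtain ⟨t, ht, h31⟩ := exists_norm_eq_one_smul_eq_of_inner_eq_zero (ha 3) (ha 1) (ha0 0) h03 h01
  have ht0 : t ≠ 0 := norm_ne_zero_iff.mp (by simp [ht])
  have hb13 : ⟪b 1, b 3⟫_𝕜 = 0 := (horth (by decide : (1 : Fin 4) ≠ 3)).resolve_left <| by
    simp [h31, inner_smul_right, inner_self_eq_norm_sq_to_K, ha 1, ht0]
  have h12 : ⟪a 1, a 2⟫_𝕜 = 0 := by
    by_contra h
    have hb12 := (horth (by decide : (1 : Fin 4) ≠ 2)).resolve_left h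
    have hb32 := (horth (by decide : (3 : Fin 4) ≠ 2)).resolve_left <| by
      simpa [h31, inner_smul_left, ht0] using h
    exact hb0 2 (eq_zero_of_inner_eq_zero_of_inner_eq_zero (hb0 1) (hb0 3) hb13 hb12 hb32)
  obtain ⟨s, hs, h20⟩ := exists_norm_eq_one_smul_eq_of_inner_eq_zero (ha 2) (ha 0) (ha0 1) h12
    (inner_eq_zero_symm.mp h01)
  have hs0 : s ≠ 0 := norm_ne_zero_iff.mp (by simp [hs])
  have hb02 : ⟪b 0, b 2⟫_𝕜 = 0 := (horth (by decide : (0 : Fin 4) ≠ 2)).resolve_left <| by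
    simp [h20, inner_smul_right, inner_self_eq_norm_sq_to_K, ha 0, hs0]
  refine ⟨s, t, h20, h31, ?_, ?_, ?_⟩ <;>
    simp [orthonormal_vecCons_iff, norm_smul, inner_smul_right, ha, hb, hs, ht, h01, hb02, hb13]

end TwoDimensional

section ProductVectors

variable {𝕜 ι κ : Type*} [RCLike 𝕜] [Fintype ι] [Fintype κ]

theorem inner_eq_inner_mul_inner_of_apply_eq_mul {ψ φ : EuclideanSpace 𝕜 (ι × κ)}
    {u u' : EuclideanSpace 𝕜 ι} {v v' : EuclideanSpace 𝕜 κ}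
    (hψ : ∀ p, ψ p = u p.1 * v p.2) (hφ : ∀ p, φ p = u' p.1 * v' p.2) :
    ⟪ψ, φ⟫_𝕜 = ⟪u, u'⟫_𝕜 * ⟪v, v'⟫_𝕜 := by
  simp only [PiLp.inner_apply, RCLike.inner_apply, hψ, hφ, map_mul, Fintype.sum_prod_type,
    Finset.sum_mul_sum]
  exact Finset.sum_congr rfl fun _ _ => Finset.sum_congr rfl fun _ _ => by ring

theorem exists_norm_eq_one_of_apply_eq_mul {ψ : EuclideanSpace 𝕜 (ι × κ)} (hψ : ‖ψ‖ = 1)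
    {u : ι → 𝕜} {v : κ → 𝕜} (h : ∀ p, ψ p = u p.1 * v p.2) :
    ∃ (a : EuclideanSpace 𝕜 ι) (b : EuclideanSpace 𝕜 κ), ‖a‖ = 1 ∧ ‖b‖ = 1 ∧
      ∀ p, ψ p = a p.1 * b p.2 := by
  obtain ⟨U, rfl⟩ : ∃ U : EuclideanSpace 𝕜 ι, U.ofLp = u := ⟨WithLp.toLp 2 u, rfl⟩
  obtain ⟨V, rfl⟩ : ∃ V : EuclideanSpace 𝕜 κ, V.ofLp = v := ⟨WithLp.toLp 2 v, rfl⟩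
  have hUV : ‖U‖ * ‖V‖ = 1 := by
    have h2 := inner_eq_inner_mul_inner_of_apply_eq_mul h h
    simp only [inner_self_eq_norm_sq_to_K, hψ] at h2
    norm_cast at h2
    rw [← mul_pow, one_pow, Nat.cast_one, eq_comm] at h2
    exact (pow_eq_one_iff_of_nonneg (by positivity) two_ne_zero).mp h2
  have hU : (‖U‖ : 𝕜) ≠ 0 := RCLike.ofReal_ne_zero.mpr (left_ne_zero_of_mul_eq_one hUV)
  refine ⟨(‖U‖ : 𝕜)⁻¹ • U, (‖U‖ : 𝕜) • V, ?_, ?_, fun p => ?_⟩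
  · rw [norm_smul, norm_inv, RCLike.norm_ofReal, abs_norm, inv_mul_cancel₀ (by exact_mod_cast hU)]
  · rw [norm_smul, RCLike.norm_ofReal, abs_norm, hUV]
  · simp only [PiLp.smul_apply, smul_eq_mul, h p]
    field_simp

end ProductVectors

theorem Fin.exists_perm_zero_of_forall_or {P Q : Fin 4 → Prop} (h : ∀ m, m ≠ 0 → P m ∨ Q m) :
    ∃ σ : Equiv.Perm (Fin 4), σ 0 = 0 ∧ (P (σ 1) ∧ P (σ 3) ∨ Q (σ 1) ∧ Q (σ 3)) := by
  rcases h 1 (by decide) with h1 | h1 <;> rcases h 2 (by decide) with h2 | h2 <;>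
    rcases h 3 (by decide) with h3 | h3 <;>
    first
    | exact ⟨1, rfl, by tauto⟩
    | exact ⟨Equiv.swap 2 3, by decide, by
        simp (disch := decide) only [Equiv.swap_apply_right, Equiv.swap_apply_of_ne_of_ne]; tauto⟩
    | exact ⟨Equiv.swap 1 2, by decide, by
        simp (disch := decide) only [Equiv.swap_apply_left, Equiv.swap_apply_of_ne_of_ne]; tauto⟩

theorem exists_product_form {𝕜 : Type*} [RCLike 𝕜] {a b : Fin 4 → EuclideanSpace 𝕜 (Fin 2)}
    (ha : ∀ m, ‖a m‖ = 1) (hb : ∀ m, ‖b m‖ = 1)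
    (horth : Pairwise fun m n => ⟪a m, a n⟫_𝕜 = 0 ∨ ⟪b m, b n⟫_𝕜 = 0)
    (h01 : ⟪a 0, a 1⟫_𝕜 = 0) (h03 : ⟪a 0, a 3⟫_𝕜 = 0) :
    ∃ α αp β βp γ γp : EuclideanSpace 𝕜 (Fin 2),
      Orthonormal 𝕜 ![α, αp] ∧ Orthonormal 𝕜 ![β, βp] ∧ Orthonormal 𝕜 ![γ, γp] ∧
      ∀ x y, a 0 x * b 0 y = α x * β y ∧ a 1 x * b 1 y = αp x * γ y ∧
        a 2 x * b 2 y = α x * βp y ∧ a 3 x * b 3 y = αp x * γp y := by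
  have : Fact (finrank 𝕜 (EuclideanSpace 𝕜 (Fin 2)) = 2) := ⟨finrank_euclideanSpace_fin⟩
  obtain ⟨s, t, h20, h31, hα, hβ, hγ⟩ :=
    exists_orthonormal_of_pairwise_inner_eq_zero_or ha hb horth h01 h03
  refine ⟨a 0, a 1, b 0, s • b 2, b 1, t • b 3, hα, hβ, hγ, fun x y => ⟨rfl, rfl, ?_, ?_⟩⟩ <;>
    simp only [h20, h31, PiLp.smul_apply, smul_eq_mul] <;> ring

theorem stmt7 (B : Fin 4 → EuclideanSpace ℂ (Fin 2 × Fin 2))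
    (hON : Orthonormal ℂ B)
    (hprod : ∀ m, ProdVec 2 2 (B m)) :
    ∃ (σ : Equiv.Perm (Fin 4)) (α αp β βp γ γp : EuclideanSpace ℂ (Fin 2)),
      Orthonormal ℂ ![α, αp] ∧ Orthonormal ℂ ![β, βp] ∧ Orthonormal ℂ ![γ, γp] ∧
      ((∀ p : Fin 2 × Fin 2,
          B (σ 0) p = α p.1 * β p.2 ∧
          B (σ 1) p = αp p.1 * γ p.2 ∧
          B (σ 2) p = α p.1 * βp p.2 ∧
          B (σ 3) p = αp p.1 * γp p.2) ∨
       -- the same form after swapping the two tensor factors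
       (∀ p : Fin 2 × Fin 2,
          B (σ 0) p = α p.2 * β p.1 ∧
          B (σ 1) p = αp p.2 * γ p.1 ∧
          B (σ 2) p = α p.2 * βp p.1 ∧
          B (σ 3) p = αp p.2 * γp p.1)) := by
  choose a b ha hb hab using fun m =>
    have ⟨_, _, huv⟩ := hprod m
    exists_norm_eq_one_of_apply_eq_mul (hON.norm_eq_one m) huv
  have horth : Pairwise fun m n => ⟪a m, a n⟫_ℂ = 0 ∨ ⟪b m, b n⟫_ℂ = 0 := fun m n hmn =>
    mul_eq_zero.mp <| by
      rw [← inner_eq_inner_mul_inner_of_apply_eq_mul (hab m) (hab n)]; exact hON.inner_eq_zero hmn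
  obtain ⟨σ, hσ, ⟨h1, h3⟩ | ⟨h1, h3⟩⟩ :=
    Fin.exists_perm_zero_of_forall_or fun m hm => horth (Ne.symm hm : (0 : Fin 4) ≠ m)
  · obtain ⟨α, αp, β, βp, γ, γp, hα, hβ, hγ, hform⟩ :=
      exists_product_form (a := a ∘ σ) (b := b ∘ σ) (fun m => ha (σ m)) (fun m => hb (σ m))
        (horth.comp_of_injective σ.injective) (by simpa [hσ] using h1) (by simpa [hσ] using h3)
    exact ⟨σ, α, αp, β, βp, γ, γp, hα, hβ, hγ, Or.inl fun p => by
      simpa only [hab, Function.comp_apply] using hform p.1 p.2⟩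
  · obtain ⟨α, αp, β, βp, γ, γp, hα, hβ, hγ, hform⟩ :=
      exists_product_form (a := b ∘ σ) (b := a ∘ σ) (fun m => hb (σ m)) (fun m => ha (σ m))
        ((horth.comp_of_injective σ.injective).mono fun _ _ => Or.symm)
        (by simpa [hσ] using h1) (by simpa [hσ] using h3)
    exact ⟨σ, α, αp, β, βp, γ, γp, hα, hβ, hγ, Or.inr fun p => by
      simpa only [hab, Function.comp_apply, mul_comm (a _ _)] using hform p.2 p.1⟩
end
end

section
/- Let s ≥ 2 and p ≥ 7 be integers, and let h_1,...,h_s, g_1,...,g_s be 2s pairwise distinct positive integers. Then the polynomial f(X) = (Σ_{i=1}^s X^{3p^{h_i}})^2 · (Σ_{k=1}^s X^{2p^{g_k}}) · (Σ_{l=1}^s X^{4p^{g_l}}) − (Σ_{k=1}^s X^{3p^{g_k}})^2 · (Σ_{i=1}^s X^{2p^{h_i}}) · (Σ_{j=1}^s X^{4p^{h_j}}) is not the zero polynomial. -/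
/-!
Take indices `i₀ ≠ i₁` and the exponent `e = 6 p^{h i₀} + 2 p^{g i₀} + 4 p^{g i₁}`. Every
exponent of either product is a sum `3 p^a + 3 p^b + 2 p^c + 4 p^d` with `a, b` from one family
and `c, d` from the other, so all its base-`p` digits are at most `6 < p`. An equality of such
exponents is therefore an equality of digit vectors, and comparing digits shows that `X^e` arises
exactly once in the first product (from `h i₀, h i₀, g i₀, g i₁`) and never in the second (the
digit `2` at position `g i₀` cannot be produced by the digits `3` at the `g`-positions).
-/

open Polynomial Finset

theorem Polynomial.eval_eq_eval_divX_mul_add {R : Type*} [CommSemiring R] (P : R[X]) (b : R) :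
    P.eval b = (divX P).eval b * b + P.coeff 0 := by
  conv_lhs => rw [← divX_mul_X_add P]
  simp

theorem Polynomial.coeff_zero_eq_and_eval_divX_eq {b : ℕ} {P Q : ℕ[X]}
    (hP : P.coeff 0 < b) (hQ : Q.coeff 0 < b) (h : P.eval b = Q.eval b) :
    P.coeff 0 = Q.coeff 0 ∧ (divX P).eval b = (divX Q).eval b := by
  rw [eval_eq_eval_divX_mul_add P, eval_eq_eval_divX_mul_add Q] at h
  have h0 : P.coeff 0 = Q.coeff 0 := by
    simpa [Nat.mod_eq_of_lt hP, Nat.mod_eq_of_lt hQ] using congrArg (· % b) h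
  refine ⟨h0, Nat.eq_of_mul_eq_mul_right ((Nat.zero_le _).trans_lt hP) ?_⟩
  rw [h0] at h
  exact Nat.add_right_cancel h

theorem Polynomial.eq_of_coeff_lt_of_eval_eq {b : ℕ} {P Q : ℕ[X]}
    (hP : ∀ n, P.coeff n < b) (hQ : ∀ n, Q.coeff n < b) (h : P.eval b = Q.eval b) :
    P = Q := by
  ext n
  induction n generalizing P Q with
  | zero => exact (coeff_zero_eq_and_eval_divX_eq (hP 0) (hQ 0) h).1
  | succ n ih =>
    rw [← coeff_divX, ← coeff_divX]
    refine ih (fun n => ?_) (fun n => ?_) (coeff_zero_eq_and_eval_divX_eq (hP 0) (hQ 0) h).2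
    · rw [coeff_divX]; exact hP _
    · rw [coeff_divX]; exact hQ _

section Collisions

variable {p a b c d a' c' d' : ℕ}

theorem coeff_eq_of_three_three_two_four_eq_six_two_four (hp : 7 ≤ p)
    (had : a ≠ d) (hbc : b ≠ c) (hbd : b ≠ d)
    (hac' : a' ≠ c') (had' : a' ≠ d') (hcd' : c' ≠ d')
    (heq : 3 * p ^ a + 3 * p ^ b + 2 * p ^ c + 4 * p ^ d = 6 * p ^ a' + 2 * p ^ c' + 4 * p ^ d')
    (n : ℕ) :
    (if n = a then 3 else 0) + (if n = b then 3 else 0) + (if n = c then 2 else 0) +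
        (if n = d then 4 else 0) =
      (if n = a' then 6 else 0) + (if n = c' then 2 else 0) + (if n = d' then 4 else 0) := by
  have hPQ := eq_of_coeff_lt_of_eval_eq (b := p)
    (P := C 3 * X ^ a + C 3 * X ^ b + C 2 * X ^ c + C 4 * X ^ d)
    (Q := C 6 * X ^ a' + C 2 * X ^ c' + C 4 * X ^ d')
    (fun n => by simp only [coeff_add, coeff_C_mul_X_pow]; split_ifs <;> omega)
    (fun n => by simp only [coeff_add, coeff_C_mul_X_pow]; split_ifs <;> omega)
    (by simpa using heq)
  simpa only [coeff_add, coeff_C_mul_X_pow] using congrArg (coeff · n) hPQ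

theorem eq_of_three_three_two_four_eq_six_two_four (hp : 7 ≤ p)
    (had : a ≠ d) (hbc : b ≠ c) (hbd : b ≠ d) (hca' : c ≠ a') (hda' : d ≠ a')
    (hac' : a' ≠ c') (had' : a' ≠ d') (hcd' : c' ≠ d')
    (heq : 3 * p ^ a + 3 * p ^ b + 2 * p ^ c + 4 * p ^ d = 6 * p ^ a' + 2 * p ^ c' + 4 * p ^ d') :
    a = a' ∧ b = a' ∧ c = c' ∧ d = d' := by
  have hcoeff :=
    coeff_eq_of_three_three_two_four_eq_six_two_four hp had hbc hbd hac' had' hcd' heq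
  have h6 := hcoeff a'
  simp only [if_neg hca'.symm, if_neg hda'.symm, if_neg hac', if_neg had'] at h6
  obtain ⟨rfl, rfl⟩ : a = a' ∧ b = a' := by split_ifs at h6 <;> omega
  have h2 := hcoeff c'
  have h4 := hcoeff d'
  simp only [if_neg hac'.symm, if_neg had'.symm, if_neg hcd', if_neg hcd'.symm] at h2 h4
  exact ⟨rfl, rfl, by split_ifs at h2 <;> omega, by split_ifs at h4 <;> omega⟩

theorem three_three_two_four_ne_six_two_four (hp : 7 ≤ p)
    (had : a ≠ d) (hbc : b ≠ c) (hbd : b ≠ d) (hc'c : c' ≠ c) (hc'd : c' ≠ d)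
    (hac' : a' ≠ c') (had' : a' ≠ d') (hcd' : c' ≠ d') :
    3 * p ^ a + 3 * p ^ b + 2 * p ^ c + 4 * p ^ d ≠ 6 * p ^ a' + 2 * p ^ c' + 4 * p ^ d' := by
  intro heq
  have h2 := coeff_eq_of_three_three_two_four_eq_six_two_four hp had hbc hbd hac' had' hcd'
    heq c'
  simp only [if_neg hc'c, if_neg hc'd, if_neg hac'.symm, if_neg hcd'] at h2
  split_ifs at h2 <;> omega

end Collisions

theorem coeff_sum_X_pow_sq_mul_sum_X_pow_mul_sum_X_pow {ι : Type*} [Fintype ι]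
    (A B C : ι → ℕ) (e : ℕ) :
    ((∑ i, (X : ℤ[X]) ^ A i) ^ 2 * (∑ k, X ^ B k) * (∑ l, X ^ C l)).coeff e =
      (#{x : ι × ι × ι × ι | A x.1 + A x.2.1 + B x.2.2.1 + C x.2.2.2 = e} : ℤ) := by
  have hexpand : (∑ i, (X : ℤ[X]) ^ A i) ^ 2 * (∑ k, X ^ B k) * (∑ l, X ^ C l) =
      ∑ x : ι × ι × ι × ι, X ^ (A x.1 + A x.2.1 + B x.2.2.1 + C x.2.2.2) := by
    simp only [sq, Finset.sum_mul, Finset.mul_sum, ← pow_add, add_assoc,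
      Fintype.sum_prod_type_right]
  simp only [hexpand, finsetSum_coeff, coeff_X_pow, eq_comm (a := e), Finset.sum_boole]

theorem sum_X_pow_three_two_four_sub_ne_zero {ι : Type*} [Fintype ι] [Nontrivial ι] {p : ℕ}
    (hp : 7 ≤ p) {h g : ι → ℕ} (hdist : Function.Injective (Sum.elim h g)) :
    ((∑ i, (X : ℤ[X]) ^ (3 * p ^ h i)) ^ 2 * (∑ k, X ^ (2 * p ^ g k)) *
        (∑ l, X ^ (4 * p ^ g l)) -
      (∑ k, (X : ℤ[X]) ^ (3 * p ^ g k)) ^ 2 * (∑ i, X ^ (2 * p ^ h i)) *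
        (∑ j, X ^ (4 * p ^ h j))) ≠ 0 := by
  have hinj : Function.Injective h := hdist.comp Sum.inl_injective
  have ginj : Function.Injective g := hdist.comp Sum.inr_injective
  have hg : ∀ i j, h i ≠ g j := fun i j => hdist.ne Sum.inl_ne_inr
  obtain ⟨i₀, i₁, hi₀₁⟩ := exists_pair_ne ι
  set e := 6 * p ^ h i₀ + 2 * p ^ g i₀ + 4 * p ^ g i₁
  have hg₀₁ : g i₀ ≠ g i₁ := ginj.ne hi₀₁
  have hfirst : ((∑ i, (X : ℤ[X]) ^ (3 * p ^ h i)) ^ 2 * (∑ k, X ^ (2 * p ^ g k)) *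
      (∑ l, X ^ (4 * p ^ g l))).coeff e = 1 := by
    rw [coeff_sum_X_pow_sq_mul_sum_X_pow_mul_sum_X_pow, Nat.cast_eq_one, card_eq_one]
    refine ⟨(i₀, i₀, i₀, i₁), ?_⟩
    ext ⟨i, j, k, l⟩
    simp only [mem_filter, mem_univ, true_and, mem_singleton, Prod.mk.injEq]
    constructor
    · intro heq
      obtain ⟨hi, hj, hk, hl⟩ := eq_of_three_three_two_four_eq_six_two_four hp
        (hg i l) (hg j k) (hg j l) (hg i₀ k).symm (hg i₀ l).symm
        (hg i₀ i₀) (hg i₀ i₁) hg₀₁ heq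
      exact ⟨hinj hi, hinj hj, ginj hk, ginj hl⟩
    · rintro ⟨rfl, rfl, rfl, rfl⟩
      ring
  have hsecond : ((∑ k, (X : ℤ[X]) ^ (3 * p ^ g k)) ^ 2 * (∑ i, X ^ (2 * p ^ h i)) *
      (∑ j, X ^ (4 * p ^ h j))).coeff e = 0 := by
    rw [coeff_sum_X_pow_sq_mul_sum_X_pow_mul_sum_X_pow, Nat.cast_eq_zero, card_eq_zero,
      filter_eq_empty_iff]
    rintro ⟨k, l, i, j⟩ -
    exact three_three_two_four_ne_six_two_four hp (hg j k).symm (hg i l).symm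
      (hg j l).symm (hg i i₀).symm (hg j i₀).symm (hg i₀ i₀) (hg i₀ i₁) hg₀₁
  intro hzero
  simpa [hfirst, hsecond] using congrArg (coeff · e) hzero

theorem stmt9_general (s p : ℕ) (hs : 2 ≤ s) (hp : 7 ≤ p)
    (h g : Fin s → ℕ)
    (hdist : Function.Injective (Sum.elim h g : Fin s ⊕ Fin s → ℕ)) :
    ((∑ i : Fin s, (X : Polynomial ℤ) ^ (3 * p ^ (h i))) ^ 2 *
        (∑ k : Fin s, (X : Polynomial ℤ) ^ (2 * p ^ (g k))) *
        (∑ l : Fin s, (X : Polynomial ℤ) ^ (4 * p ^ (g l))) -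
      (∑ k : Fin s, (X : Polynomial ℤ) ^ (3 * p ^ (g k))) ^ 2 *
        (∑ i : Fin s, (X : Polynomial ℤ) ^ (2 * p ^ (h i))) *
        (∑ j : Fin s, (X : Polynomial ℤ) ^ (4 * p ^ (h j)))) ≠ 0 := by
  have : Nontrivial (Fin s) := Fin.nontrivial_iff_two_le.mpr hs
  exact sum_X_pow_three_two_four_sub_ne_zero hp hdist

theorem stmt9 (s p : ℕ) (hs : 2 ≤ s) (hp : 7 ≤ p)
    (h g : Fin s → ℕ)
    (hpos : ∀ i, 0 < h i) (gpos : ∀ i, 0 < g i)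
    (hdist : Function.Injective (Sum.elim h g : Fin s ⊕ Fin s → ℕ)) :
    ((∑ i : Fin s, (X : Polynomial ℤ) ^ (3 * p ^ (h i))) ^ 2 *
        (∑ k : Fin s, (X : Polynomial ℤ) ^ (2 * p ^ (g k))) *
        (∑ l : Fin s, (X : Polynomial ℤ) ^ (4 * p ^ (g l))) -
      (∑ k : Fin s, (X : Polynomial ℤ) ^ (3 * p ^ (g k))) ^ 2 *
        (∑ i : Fin s, (X : Polynomial ℤ) ^ (2 * p ^ (h i))) *
        (∑ j : Fin s, (X : Polynomial ℤ) ^ (4 * p ^ (h j)))) ≠ 0 :=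
  stmt9_general s p hs hp h g hdist
end

section
/- Let x ∈ (0,1) be a real number and let i, j, k, l be distinct positive integers, p ≥ 2 an integer. Suppose there exists a 2×2 unitary matrix V and phases θ_1, θ_2 such that the normalized row vector of (x^{p^k}, x^{p^l}) times V equals e^{iθ_1} times the normalized row vector of (x^{p^i}, x^{p^j}), and the normalized row vector of (x^{2p^k}, x^{2p^l}) times V equals e^{iθ_2} times the normalized row vector of (x^{2p^i}, x^{2p^j}). Then (x^{3p^k}+x^{3p^l})^2 · (x^{2p^i}+x^{2p^j}) · (x^{4p^i}+x^{4p^j}) = (x^{3p^i}+x^{3p^j})^2 · (x^{2p^k}+x^{2p^l}) · (x^{4p^k}+x^{4p^l}). -/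
/-!
A unitary `V` preserves the Hermitian pairing `⟨u, w⟩ = u ⬝ᵥ star w`, so the two hypotheses
force the pairings of the normalized rows on both sides to agree in absolute value; the phases
drop out. For the rows `(x^m, x^n)` and `(x^{2m}, x^{2n})` this pairing is `x^{3m} + x^{3n}`,
and squaring the resulting identity clears the square roots of the normalizations.
-/

noncomputable section

open Matrix

theorem vecMul_dotProduct_star_vecMul_of_mem_unitaryGroup {n R : Type*} [Fintype n]
    [DecidableEq n] [CommRing R] [StarRing R] {V : Matrix n n R}
    (hV : V ∈ unitaryGroup n R) (u w : n → R) :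
    (u ᵥ* V) ⬝ᵥ star (w ᵥ* V) = u ⬝ᵥ star w := by
  rw [star_vecMul, dotProduct_mulVec, vecMul_vecMul, ← star_eq_conjTranspose,
    mem_unitaryGroup_iff.mp hV, vecMul_one]

theorem norm_mul_norm_dotProduct_eq_of_smul_vecMul_eq {n 𝕜 : Type*} [Fintype n]
    [DecidableEq n] [RCLike 𝕜] {V : Matrix n n 𝕜} (hV : V ∈ unitaryGroup n 𝕜)
    {a b c d : 𝕜} {u w u' w' : n → 𝕜}
    (hu : a • (u ᵥ* V) = c • u') (hw : b • (w ᵥ* V) = d • w') :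
    ‖a‖ * ‖b‖ * ‖u ⬝ᵥ star w‖ = ‖c‖ * ‖d‖ * ‖u' ⬝ᵥ star w'‖ := by
  have key := congrArg norm (congrArg₂ (fun v v' => v ⬝ᵥ star v') hu hw)
  simp only [smul_dotProduct, star_smul, dotProduct_smul, smul_eq_mul, norm_mul, norm_star,
    vecMul_dotProduct_star_vecMul_of_mem_unitaryGroup hV] at key
  linear_combination key

theorem pow_vec_dotProduct_star_pow_vec (x : ℝ) (m n : ℕ) :
    ![(x : ℂ) ^ m, (x : ℂ) ^ n] ⬝ᵥ star ![(x : ℂ) ^ (2 * m), (x : ℂ) ^ (2 * n)] =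
      ((x ^ (3 * m) + x ^ (3 * n) : ℝ) : ℂ) := by
  simp only [dotProduct, Fin.sum_univ_two, Pi.star_apply, Matrix.cons_val_zero,
    Matrix.cons_val_one, Complex.star_def, map_pow, Complex.conj_ofReal]
  push_cast
  ring

theorem sq_mul_mul_eq_of_abs_mul_inv_sqrt_eq {s t A B C D : ℝ}
    (hA : 0 < A) (hB : 0 < B) (hC : 0 < C) (hD : 0 < D)
    (h : (√A)⁻¹ * (√B)⁻¹ * |s| = (√C)⁻¹ * (√D)⁻¹ * |t|) :
    s ^ 2 * (C * D) = t ^ 2 * (A * B) := by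
  have hA' := Real.sqrt_pos.mpr hA
  have hB' := Real.sqrt_pos.mpr hB
  have hC' := Real.sqrt_pos.mpr hC
  have hD' := Real.sqrt_pos.mpr hD
  have h' : |s| * (√C * √D) = |t| * (√A * √B) := by
    field_simp at h
    linear_combination h
  calc s ^ 2 * (C * D) = (|s| * (√C * √D)) ^ 2 := by
        rw [mul_pow, mul_pow, sq_abs, Real.sq_sqrt hC.le, Real.sq_sqrt hD.le]
    _ = (|t| * (√A * √B)) ^ 2 := by rw [h']
    _ = t ^ 2 * (A * B) := by
        rw [mul_pow, mul_pow, sq_abs, Real.sq_sqrt hA.le, Real.sq_sqrt hB.le]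

theorem stmt11_general (x : ℝ) (hx : x ∈ Set.Ioo (0 : ℝ) 1)
    (p i j k l : ℕ)
    (V : Matrix (Fin 2) (Fin 2) ℂ) (hV : V ∈ Matrix.unitaryGroup (Fin 2) ℂ)
    (θ1 θ2 : ℝ)
    (h1 : ((Real.sqrt (x ^ (2 * p ^ k) + x ^ (2 * p ^ l)) : ℂ))⁻¹ •
        Matrix.vecMul ![((x : ℂ)) ^ (p ^ k), ((x : ℂ)) ^ (p ^ l)] V =
      Complex.exp (θ1 * Complex.I) •
        (((Real.sqrt (x ^ (2 * p ^ i) + x ^ (2 * p ^ j)) : ℂ))⁻¹ •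
          ![((x : ℂ)) ^ (p ^ i), ((x : ℂ)) ^ (p ^ j)]))
    (h2 : ((Real.sqrt (x ^ (4 * p ^ k) + x ^ (4 * p ^ l)) : ℂ))⁻¹ •
        Matrix.vecMul ![((x : ℂ)) ^ (2 * p ^ k), ((x : ℂ)) ^ (2 * p ^ l)] V =
      Complex.exp (θ2 * Complex.I) •
        (((Real.sqrt (x ^ (4 * p ^ i) + x ^ (4 * p ^ j)) : ℂ))⁻¹ •
          ![((x : ℂ)) ^ (2 * p ^ i), ((x : ℂ)) ^ (2 * p ^ j)])) :
    (x ^ (3 * p ^ k) + x ^ (3 * p ^ l)) ^ 2 *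
        ((x ^ (2 * p ^ i) + x ^ (2 * p ^ j)) * (x ^ (4 * p ^ i) + x ^ (4 * p ^ j))) =
      (x ^ (3 * p ^ i) + x ^ (3 * p ^ j)) ^ 2 *
        ((x ^ (2 * p ^ k) + x ^ (2 * p ^ l)) * (x ^ (4 * p ^ k) + x ^ (4 * p ^ l))) := by
  have hx0 := hx.1
  rw [smul_smul] at h1 h2
  have key := norm_mul_norm_dotProduct_eq_of_smul_vecMul_eq hV h1 h2
  simp only [pow_vec_dotProduct_star_pow_vec, norm_mul, norm_inv, Complex.norm_real,
    Real.norm_eq_abs, abs_of_nonneg (Real.sqrt_nonneg _), Complex.norm_exp_ofReal_mul_I,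
    one_mul] at key
  exact sq_mul_mul_eq_of_abs_mul_inv_sqrt_eq (by positivity) (by positivity) (by positivity)
    (by positivity) key

theorem stmt11 (x : ℝ) (hx : x ∈ Set.Ioo (0 : ℝ) 1)
    (p i j k l : ℕ) (hp : 2 ≤ p)
    (hipos : 0 < i) (hjpos : 0 < j) (hkpos : 0 < k) (hlpos : 0 < l)
    (hij : i ≠ j) (hik : i ≠ k) (hil : i ≠ l) (hjk : j ≠ k) (hjl : j ≠ l) (hkl : k ≠ l)
    (V : Matrix (Fin 2) (Fin 2) ℂ) (hV : V ∈ Matrix.unitaryGroup (Fin 2) ℂ)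
    (θ1 θ2 : ℝ)
    (h1 : ((Real.sqrt (x ^ (2 * p ^ k) + x ^ (2 * p ^ l)) : ℂ))⁻¹ •
        Matrix.vecMul ![((x : ℂ)) ^ (p ^ k), ((x : ℂ)) ^ (p ^ l)] V =
      Complex.exp (θ1 * Complex.I) •
        (((Real.sqrt (x ^ (2 * p ^ i) + x ^ (2 * p ^ j)) : ℂ))⁻¹ •
          ![((x : ℂ)) ^ (p ^ i), ((x : ℂ)) ^ (p ^ j)]))
    (h2 : ((Real.sqrt (x ^ (4 * p ^ k) + x ^ (4 * p ^ l)) : ℂ))⁻¹ •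
        Matrix.vecMul ![((x : ℂ)) ^ (2 * p ^ k), ((x : ℂ)) ^ (2 * p ^ l)] V =
      Complex.exp (θ2 * Complex.I) •
        (((Real.sqrt (x ^ (4 * p ^ i) + x ^ (4 * p ^ j)) : ℂ))⁻¹ •
          ![((x : ℂ)) ^ (2 * p ^ i), ((x : ℂ)) ^ (2 * p ^ j)])) :
    (x ^ (3 * p ^ k) + x ^ (3 * p ^ l)) ^ 2 *
        ((x ^ (2 * p ^ i) + x ^ (2 * p ^ j)) * (x ^ (4 * p ^ i) + x ^ (4 * p ^ j))) =
      (x ^ (3 * p ^ i) + x ^ (3 * p ^ j)) ^ 2 *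
        ((x ^ (2 * p ^ k) + x ^ (2 * p ^ l)) * (x ^ (4 * p ^ k) + x ^ (4 * p ^ l))) :=
  stmt11_general x hx p i j k l V hV θ1 θ2 h1 h2
end
end

section
/- Let n ≥ 2 and let x ∈ (0,1) be a real number. Let g_1,...,g_n and h_1,...,h_n be 2n distinct positive integers, p ≥ 2 an integer. Suppose there is an n×n unitary matrix W and phases φ_1, φ_2 with N([x^{p^{h_1}},...,x^{p^{h_n}}])·W = e^{iφ_1}·N([x^{p^{g_1}},...,x^{p^{g_n}}]) and N([x^{2p^{h_1}},...,x^{2p^{h_n}}])·W = e^{iφ_2}·N([x^{2p^{g_1}},...,x^{2p^{g_n}}]). Then (Σ_i x^{3p^{h_i}})^2 · (Σ_k x^{2p^{g_k}}) · (Σ_l x^{4p^{g_l}}) = (Σ_k x^{3p^{g_k}})^2 · (Σ_i x^{2p^{h_i}}) · (Σ_j x^{4p^{h_j}}). -/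
/-! A unitary matrix preserves the Hermitian product, so the two hypotheses give
`‖⟨N(x^{p^h}), N(x^{2p^h})⟩‖ = ‖⟨N(x^{p^g}), N(x^{2p^g})⟩‖`. For positive `x` both products are
`∑ x^{3p^·}` divided by the square roots of positive sums; squaring clears the roots. -/

noncomputable section

open Matrix Finset

theorem Matrix.vecMul_dotProduct_star_vecMul_of_mem_unitaryGroup {ι α : Type*} [Fintype ι]
    [DecidableEq ι] [CommRing α] [StarRing α] {W : Matrix ι ι α}
    (hW : W ∈ Matrix.unitaryGroup ι α) (u v : ι → α) :
    u ᵥ* W ⬝ᵥ star (v ᵥ* W) = u ⬝ᵥ star v := by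
  rw [star_vecMul, dotProduct_mulVec, vecMul_vecMul, ← star_eq_conjTranspose,
    mem_unitaryGroup_iff.mp hW, vecMul_one]

theorem Matrix.norm_mul_norm_mul_norm_dotProduct_star_eq_of_smul_vecMul_eq {ι : Type*}
    [Fintype ι] [DecidableEq ι] {W : Matrix ι ι ℂ} (hW : W ∈ Matrix.unitaryGroup ι ℂ) {u v u' v' : ι → ℂ}
    {a b a' b' e₁ e₂ : ℂ} (hu : a • u ᵥ* W = e₁ • a' • u') (hv : b • v ᵥ* W = e₂ • b' • v')
    (he₁ : ‖e₁‖ = 1) (he₂ : ‖e₂‖ = 1) :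
    ‖a‖ * ‖b‖ * ‖u ⬝ᵥ star v‖ = ‖a'‖ * ‖b'‖ * ‖u' ⬝ᵥ star v'‖ := by
  have h := congrArg₂ (fun s t : ι → ℂ => s ⬝ᵥ star t) hu hv
  simp only [smul_dotProduct, dotProduct_smul, star_smul, smul_eq_mul,
    vecMul_dotProduct_star_vecMul_of_mem_unitaryGroup hW] at h
  have := congrArg norm h
  simp only [norm_mul, norm_star, he₁, he₂, one_mul] at this
  linarith

theorem ofReal_pow_dotProduct_star_ofReal_pow {ι : Type*} [Fintype ι] (x : ℝ) (a b : ι → ℕ) :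
    (fun i => (x : ℂ) ^ a i) ⬝ᵥ star (fun i => (x : ℂ) ^ b i) =
      ((∑ i, x ^ (a i + b i) : ℝ) : ℂ) := by
  simp [dotProduct, pow_add]

theorem sq_mul_eq_sq_mul_of_inv_sqrt_mul_eq {A B A' B' S S' : ℝ}
    (hA : 0 < A) (hB : 0 < B) (hA' : 0 < A') (hB' : 0 < B')
    (h : (√A)⁻¹ * (√B)⁻¹ * |S| = (√A')⁻¹ * (√B')⁻¹ * |S'|) :
    S ^ 2 * (A' * B') = S' ^ 2 * (A * B) := by
  have h2 := congrArg (· ^ 2) h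
  simp only [mul_pow, inv_pow, sq_abs, Real.sq_sqrt hA.le, Real.sq_sqrt hB.le,
    Real.sq_sqrt hA'.le, Real.sq_sqrt hB'.le] at h2
  field_simp at h2
  linarith

theorem stmt12_general (n : ℕ) (hn : 2 ≤ n) (x : ℝ) (hx : x ∈ Set.Ioo (0 : ℝ) 1)
    (p : ℕ)
    (h g : Fin n → ℕ)
    (W : Matrix (Fin n) (Fin n) ℂ) (hW : W ∈ Matrix.unitaryGroup (Fin n) ℂ)
    (φ1 φ2 : ℝ)
    (h1 : ((Real.sqrt (∑ i : Fin n, x ^ (2 * p ^ (h i))) : ℂ))⁻¹ •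
        Matrix.vecMul (fun i => ((x : ℂ)) ^ (p ^ (h i))) W =
      Complex.exp (φ1 * Complex.I) •
        (((Real.sqrt (∑ i : Fin n, x ^ (2 * p ^ (g i))) : ℂ))⁻¹ •
          fun i => ((x : ℂ)) ^ (p ^ (g i))))
    (h2 : ((Real.sqrt (∑ i : Fin n, x ^ (4 * p ^ (h i))) : ℂ))⁻¹ •
        Matrix.vecMul (fun i => ((x : ℂ)) ^ (2 * p ^ (h i))) W =
      Complex.exp (φ2 * Complex.I) •
        (((Real.sqrt (∑ i : Fin n, x ^ (4 * p ^ (g i))) : ℂ))⁻¹ •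
          fun i => ((x : ℂ)) ^ (2 * p ^ (g i)))) :
    (∑ i : Fin n, x ^ (3 * p ^ (h i))) ^ 2 *
        ((∑ k : Fin n, x ^ (2 * p ^ (g k))) * (∑ l : Fin n, x ^ (4 * p ^ (g l)))) =
      (∑ k : Fin n, x ^ (3 * p ^ (g k))) ^ 2 *
        ((∑ i : Fin n, x ^ (2 * p ^ (h i))) * (∑ j : Fin n, x ^ (4 * p ^ (h j)))) := by
  have : Nonempty (Fin n) := ⟨⟨0, by omega⟩⟩
  have hsum_pos (f : Fin n → ℕ) : 0 < ∑ i, x ^ f i :=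
    sum_pos (fun i _ => pow_pos hx.1 _) univ_nonempty
  have key := norm_mul_norm_mul_norm_dotProduct_star_eq_of_smul_vecMul_eq hW h1 h2
    (Complex.norm_exp_ofReal_mul_I φ1) (Complex.norm_exp_ofReal_mul_I φ2)
  have hexp (k : ℕ) : k + 2 * k = 3 * k := by ring
  simp only [ofReal_pow_dotProduct_star_ofReal_pow, hexp, norm_inv, Complex.norm_real,
    Real.norm_eq_abs, abs_of_nonneg (Real.sqrt_nonneg _)] at key
  exact sq_mul_eq_sq_mul_of_inv_sqrt_mul_eq (hsum_pos _) (hsum_pos _) (hsum_pos _)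
    (hsum_pos _) key

theorem stmt12 (n : ℕ) (hn : 2 ≤ n) (x : ℝ) (hx : x ∈ Set.Ioo (0 : ℝ) 1)
    (p : ℕ) (hp : 2 ≤ p)
    (h g : Fin n → ℕ)
    (hpos : ∀ i, 0 < h i) (gpos : ∀ i, 0 < g i)
    (hdist : Function.Injective (Sum.elim h g : Fin n ⊕ Fin n → ℕ))
    (W : Matrix (Fin n) (Fin n) ℂ) (hW : W ∈ Matrix.unitaryGroup (Fin n) ℂ)
    (φ1 φ2 : ℝ)
    (h1 : ((Real.sqrt (∑ i : Fin n, x ^ (2 * p ^ (h i))) : ℂ))⁻¹ •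
        Matrix.vecMul (fun i => ((x : ℂ)) ^ (p ^ (h i))) W =
      Complex.exp (φ1 * Complex.I) •
        (((Real.sqrt (∑ i : Fin n, x ^ (2 * p ^ (g i))) : ℂ))⁻¹ •
          fun i => ((x : ℂ)) ^ (p ^ (g i))))
    (h2 : ((Real.sqrt (∑ i : Fin n, x ^ (4 * p ^ (h i))) : ℂ))⁻¹ •
        Matrix.vecMul (fun i => ((x : ℂ)) ^ (2 * p ^ (h i))) W =
      Complex.exp (φ2 * Complex.I) •
        (((Real.sqrt (∑ i : Fin n, x ^ (4 * p ^ (g i))) : ℂ))⁻¹ •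
          fun i => ((x : ℂ)) ^ (2 * p ^ (g i)))) :
    (∑ i : Fin n, x ^ (3 * p ^ (h i))) ^ 2 *
        ((∑ k : Fin n, x ^ (2 * p ^ (g k))) * (∑ l : Fin n, x ^ (4 * p ^ (g l)))) =
      (∑ k : Fin n, x ^ (3 * p ^ (g k))) ^ 2 *
        ((∑ i : Fin n, x ^ (2 * p ^ (h i))) * (∑ j : Fin n, x ^ (4 * p ^ (h j)))) :=
  stmt12_general n hn x hx p h g W hW φ1 φ2 h1 h2
end
end

section
/- Let x ∈ (0,1) be real and p ≥ 2. For distinct positive integers i, j, define F_{ij}(x) = (x^{3p^i} + x^{3p^j})^2 / ((x^{2p^i}+x^{2p^j})(x^{4p^i}+x^{4p^j})). Then for i, j, k, l distinct with {i,j} ≠ {k,l}, F_{ij}(x) = F_{kl}(x) holds if and only if x is a root of the nonzero polynomial f^{(p)}_{ij|kl}(X) = (X^{3p^k}+X^{3p^l})^2(X^{2p^i}+X^{2p^j})(X^{4p^i}+X^{4p^j}) − (X^{3p^i}+X^{3p^j})^2(X^{2p^k}+X^{2p^l})(X^{4p^k}+X^{4p^l}); in particular (for p ≥ 7) the set of x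 ∈ (0,1) where F_{ij}(x) = F_{kl}(x) is finite. -/
/-!
Clearing the positive denominators turns `F i j x = F k l x` into `f.eval x = 0`. The polynomial
`f` is the Kronecker substitution `Y n ↦ X ^ p ^ n` of the polynomial `crossDiff i j k l` in the
variables `Y i, Y j, Y k, Y l`, in which each variable occurs with exponent at most 6. For `p ≥ 7`
this substitution is injective on such polynomials by uniqueness of base-`p` expansions, and
`crossDiff i j k l` is nonzero: it takes the value `-16` at `Y k = 2`, `Y n = 1` otherwise.
-/

noncomputable section

open Polynomial

theorem Finsupp.weight_pow_injOn {p : ℕ} (hp : 1 < p) :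
    Set.InjOn (Finsupp.weight (p ^ · : ℕ → ℕ)) {m | ∀ n, m n < p} := by
  intro m hm m' hm' h
  obtain ⟨N, hN⟩ := (m.support ∪ m'.support).exists_nat_subset_range
  have weight_eq_ofDigits (d : ℕ →₀ ℕ) (hd : d.support ⊆ Finset.range N) :
      Finsupp.weight (p ^ · : ℕ → ℕ) d =
        Nat.ofDigits p (List.ofFn fun n : Fin N => d n) := by
    rw [Finsupp.weight_apply, Finsupp.sum_of_support_subset d hd _ (by simp),
      Nat.ofDigits_eq_sum_mapIdx, List.mapIdx_eq_ofFn, List.sum_ofFn]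
    simp only [smul_eq_mul, List.get_ofFn, Fin.val_cast, List.length_ofFn,
      Fin.sum_univ_eq_sum_range (fun n => d n * p ^ n)]
  have hdigits : (List.ofFn fun n : Fin N => m n) = List.ofFn fun n : Fin N => m' n := by
    refine Nat.ofDigits_inj_of_len_eq hp (by simp) (by simp [hm.out]) (by simp [hm'.out]) ?_
    rw [← weight_eq_ofDigits m (by grind), ← weight_eq_ofDigits m' (by grind), h]
  ext n
  by_cases hn : n < N
  · exact congrFun (List.ofFn_inj.mp hdigits) ⟨n, hn⟩
  · have : n ∉ m.support ∪ m'.support := fun h => hn (Finset.mem_range.mp (hN h))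
    simp_all

namespace MvPolynomial

variable {R : Type*} [CommSemiring R] {p : ℕ}

theorem aeval_X_pow_pow_monomial (m : ℕ →₀ ℕ) (c : R) :
    aeval (fun n => (Polynomial.X : R[X]) ^ p ^ n) (monomial m c) =
      Polynomial.C c * Polynomial.X ^ Finsupp.weight (p ^ · : ℕ → ℕ) m := by
  rw [aeval_monomial, Finsupp.weight_apply, Finsupp.prod, Finsupp.sum]
  simp only [← pow_mul, Finset.prod_pow_eq_pow_sum, smul_eq_mul, mul_comm,
    Polynomial.algebraMap_eq]

theorem coeff_aeval_X_pow_pow_weight (hp : 1 < p) {g : MvPolynomial ℕ R}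
    (hg : ∀ n, g.degreeOf n < p) {m : ℕ →₀ ℕ} (hm : ∀ n, m n < p) :
    (aeval (fun n => (Polynomial.X : R[X]) ^ p ^ n) g).coeff
      (Finsupp.weight (p ^ · : ℕ → ℕ) m) = g.coeff m := by
  conv_lhs => rw [g.as_sum]
  simp only [map_sum, aeval_X_pow_pow_monomial, Polynomial.finsetSum_coeff,
    Polynomial.coeff_C_mul_X_pow]
  refine (Finset.sum_eq_single m (fun m' hm' hne => ?_) (fun hm' => ?_)).trans (if_pos rfl)
  · refine if_neg fun h => hne (Finsupp.weight_pow_injOn hp hm ?_ h).symm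
    exact fun n => (le_degreeOf_of_mem_support n hm').trans_lt (hg n)
  · rw [if_pos rfl, notMem_support_iff.mp hm']

theorem eq_zero_of_aeval_X_pow_pow_eq_zero (hp : 1 < p) {g : MvPolynomial ℕ R}
    (hg : ∀ n, g.degreeOf n < p)
    (h : aeval (fun n => (Polynomial.X : R[X]) ^ p ^ n) g = 0) : g = 0 := by
  ext m
  by_cases hm : m ∈ g.support
  · rw [← coeff_aeval_X_pow_pow_weight hp hg
      (fun n => (le_degreeOf_of_mem_support n hm).trans_lt (hg n)), h]
    simp
  · exact notMem_support_iff.mp hm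

section DegreeOf

variable {σ : Type*} [DecidableEq σ]

theorem degreeOf_X_pow_le (n a : σ) (e : ℕ) :
    degreeOf n (X a ^ e : MvPolynomial σ R) ≤ if n = a then e else 0 := by
  rw [X_pow_eq_monomial, degreeOf_le_iff]
  intro m hm
  rw [Finset.mem_singleton.mp (support_monomial_subset hm)]
  exact le_of_eq (by simp [Finsupp.single_apply, eq_comm])

theorem degreeOf_X_pow_add_X_pow_le (n a b : σ) (e : ℕ) :
    degreeOf n (X a ^ e + X b ^ e : MvPolynomial σ R) ≤ if n = a ∨ n = b then e else 0 := by
  refine (degreeOf_add_le n _ _).trans (max_le ?_ ?_) <;>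
    refine (degreeOf_X_pow_le n _ e).trans ?_ <;> split_ifs <;> simp_all

end DegreeOf

end MvPolynomial

section
variable {σ R : Type*} [CommSemiring R]
open MvPolynomial

def cubeSumSq (a b : σ) : MvPolynomial σ R := (X a ^ 3 + X b ^ 3) ^ 2

def sqSumMulQuartSum (a b : σ) : MvPolynomial σ R := (X a ^ 2 + X b ^ 2) * (X a ^ 4 + X b ^ 4)

variable [DecidableEq σ]

theorem degreeOf_cubeSumSq_le (n a b : σ) :
    degreeOf n (cubeSumSq a b : MvPolynomial σ R) ≤ if n = a ∨ n = b then 6 else 0 := by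
  refine (degreeOf_pow_le n _ 2).trans ?_
  have := degreeOf_X_pow_add_X_pow_le (R := R) n a b 3
  split_ifs at * <;> omega

theorem degreeOf_sqSumMulQuartSum_le (n a b : σ) :
    degreeOf n (sqSumMulQuartSum a b : MvPolynomial σ R) ≤ if n = a ∨ n = b then 6 else 0 := by
  refine (degreeOf_mul_le n _ _).trans ?_
  have := degreeOf_X_pow_add_X_pow_le (R := R) n a b 2
  have := degreeOf_X_pow_add_X_pow_le (R := R) n a b 4
  split_ifs at * <;> omega

end

section
variable {σ R : Type*} [CommRing R]
open MvPolynomial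

def crossDiff (i j k l : σ) : MvPolynomial σ R :=
  cubeSumSq k l * sqSumMulQuartSum i j - cubeSumSq i j * sqSumMulQuartSum k l

theorem degreeOf_crossDiff_le [DecidableEq σ] {i j k l : σ} (hik : i ≠ k) (hil : i ≠ l)
    (hjk : j ≠ k) (hjl : j ≠ l) (n : σ) :
    degreeOf n (crossDiff i j k l : MvPolynomial σ R) ≤ 6 := by
  have := degreeOf_cubeSumSq_le (R := R) n i j
  have := degreeOf_cubeSumSq_le (R := R) n k l
  have := degreeOf_sqSumMulQuartSum_le (R := R) n i j
  have := degreeOf_sqSumMulQuartSum_le (R := R) n k l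
  have hdisj : ¬((n = i ∨ n = j) ∧ (n = k ∨ n = l)) := by
    rintro ⟨rfl | rfl, rfl | rfl⟩ <;> contradiction
  refine (degreeOf_sub_le n _ _).trans (max_le ?_ ?_) <;>
    refine (degreeOf_mul_le n _ _).trans ?_ <;> split_ifs at * <;>
    first | omega | exact absurd ⟨‹_›, ‹_›⟩ hdisj

theorem eval_crossDiff [DecidableEq σ] {i j k l : σ} (hik : i ≠ k) (hjk : j ≠ k)
    (hkl : k ≠ l) :
    eval (fun n => if n = k then 2 else 1) (crossDiff i j k l : MvPolynomial σ R) = -16 := by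
  norm_num [crossDiff, cubeSumSq, sqSumMulQuartSum, hik, hjk, hkl.symm]

theorem crossDiff_ne_zero [CharZero R] {i j k l : σ} (hik : i ≠ k) (hjk : j ≠ k)
    (hkl : k ≠ l) :
    (crossDiff i j k l : MvPolynomial σ R) ≠ 0 := by
  classical
  intro h
  simpa [h] using eval_crossDiff (R := R) hik hjk hkl

end

theorem aeval_crossDiff {R : Type*} [CommRing R] (p i j k l : ℕ) :
    MvPolynomial.aeval (fun n => (X : R[X]) ^ p ^ n) (crossDiff i j k l : MvPolynomial ℕ R) =
      ((X : R[X]) ^ (3 * p ^ k) + X ^ (3 * p ^ l)) ^ 2 *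
          ((X ^ (2 * p ^ i) + X ^ (2 * p ^ j)) * (X ^ (4 * p ^ i) + X ^ (4 * p ^ j))) -
        ((X : R[X]) ^ (3 * p ^ i) + X ^ (3 * p ^ j)) ^ 2 *
          ((X ^ (2 * p ^ k) + X ^ (2 * p ^ l)) * (X ^ (4 * p ^ k) + X ^ (4 * p ^ l))) := by
  simp [crossDiff, cubeSumSq, sqSumMulQuartSum, ← pow_mul, mul_comm]

theorem stmt16_general (p i j k l : ℕ)
    (hik : i ≠ k) (hil : i ≠ l) (hjk : j ≠ k) (hjl : j ≠ l) (hkl : k ≠ l)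
    (F : ℕ → ℕ → ℝ → ℝ)
    (hF : ∀ a b x, F a b x =
      (x ^ (3 * p ^ a) + x ^ (3 * p ^ b)) ^ 2 /
        ((x ^ (2 * p ^ a) + x ^ (2 * p ^ b)) * (x ^ (4 * p ^ a) + x ^ (4 * p ^ b))))
    (f : Polynomial ℝ)
    (hf : f =
      ((X : Polynomial ℝ) ^ (3 * p ^ k) + X ^ (3 * p ^ l)) ^ 2 *
          ((X ^ (2 * p ^ i) + X ^ (2 * p ^ j)) * (X ^ (4 * p ^ i) + X ^ (4 * p ^ j))) -
        ((X : Polynomial ℝ) ^ (3 * p ^ i) + X ^ (3 * p ^ j)) ^ 2 *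
          ((X ^ (2 * p ^ k) + X ^ (2 * p ^ l)) * (X ^ (4 * p ^ k) + X ^ (4 * p ^ l)))) :
    (∀ x ∈ Set.Ioo (0 : ℝ) 1, (F i j x = F k l x ↔ Polynomial.eval x f = 0)) ∧
    (7 ≤ p → f ≠ 0 ∧ Set.Finite {x : ℝ | x ∈ Set.Ioo (0 : ℝ) 1 ∧ F i j x = F k l x}) := by
  have hroots : ∀ x ∈ Set.Ioo (0 : ℝ) 1, (F i j x = F k l x ↔ f.eval x = 0) := by
    rintro x ⟨hx, -⟩
    rw [hF, hF, hf]
    simp only [eval_sub, eval_mul, eval_add, eval_pow, eval_X]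
    rw [div_eq_div_iff (by positivity) (by positivity), sub_eq_zero, eq_comm]
  refine ⟨hroots, fun hp => ?_⟩
  have hf0 : f ≠ 0 := by
    rw [hf, ← aeval_crossDiff]
    exact fun h => crossDiff_ne_zero hik hjk hkl <|
      MvPolynomial.eq_zero_of_aeval_X_pow_pow_eq_zero (by omega)
        (fun n => (degreeOf_crossDiff_le hik hil hjk hjl n).trans_lt hp) h
  exact ⟨hf0, (finite_setOfPred_isRoot hf0).subset fun x hx => (hroots x hx.1).mp hx.2⟩

theorem stmt16 (p i j k l : ℕ) (hp : 2 ≤ p)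
    (hipos : 0 < i) (hjpos : 0 < j) (hkpos : 0 < k) (hlpos : 0 < l)
    (hij : i ≠ j) (hik : i ≠ k) (hil : i ≠ l) (hjk : j ≠ k) (hjl : j ≠ l) (hkl : k ≠ l)
    (F : ℕ → ℕ → ℝ → ℝ)
    (hF : ∀ a b x, F a b x =
      (x ^ (3 * p ^ a) + x ^ (3 * p ^ b)) ^ 2 /
        ((x ^ (2 * p ^ a) + x ^ (2 * p ^ b)) * (x ^ (4 * p ^ a) + x ^ (4 * p ^ b))))
    (f : Polynomial ℝ)
    (hf : f =
      ((X : Polynomial ℝ) ^ (3 * p ^ k) + X ^ (3 * p ^ l)) ^ 2 *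
          ((X ^ (2 * p ^ i) + X ^ (2 * p ^ j)) * (X ^ (4 * p ^ i) + X ^ (4 * p ^ j))) -
        ((X : Polynomial ℝ) ^ (3 * p ^ i) + X ^ (3 * p ^ j)) ^ 2 *
          ((X ^ (2 * p ^ k) + X ^ (2 * p ^ l)) * (X ^ (4 * p ^ k) + X ^ (4 * p ^ l)))) :
    (∀ x ∈ Set.Ioo (0 : ℝ) 1, (F i j x = F k l x ↔ Polynomial.eval x f = 0)) ∧
    (7 ≤ p → f ≠ 0 ∧ Set.Finite {x : ℝ | x ∈ Set.Ioo (0 : ℝ) 1 ∧ F i j x = F k l x}) :=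
  stmt16_general p i j k l hik hil hjk hjl hkl F hF f hf
end
end

section
/- Let x ∈ (0,1) be a real number that is not a root of any of the three polynomials f^{(2)}_{12|34}, f^{(2)}_{13|24}, f^{(2)}_{14|23}. Let {ξ_1, ξ_2, ξ_3, ξ_4} be an orthonormal basis of C^4. Then the set of five states {ξ_1, ξ_2, ξ_3, Σ_{j=1}^4 x^{2^j} ξ_j, Σ_{j=1}^4 x^{2·2^j} ξ_j} is an absolutely entangled set in C^2 ⊗ C^2: for every unitary U ∈ U(4), at least one of the five states is mapped by U to a non-product vector. -/
noncomputable section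

open Finset

/-- `fval x i j k l` is the value at `x` of the polynomial `f^{(2)}_{ij|kl}`. -/
def fval (x : ℝ) (i j k l : ℕ) : ℝ :=
  (x ^ (3 * 2 ^ k) + x ^ (3 * 2 ^ l)) ^ 2 *
      ((x ^ (2 * 2 ^ i) + x ^ (2 * 2 ^ j)) * (x ^ (4 * 2 ^ i) + x ^ (4 * 2 ^ j))) -
    (x ^ (3 * 2 ^ i) + x ^ (3 * 2 ^ j)) ^ 2 *
      ((x ^ (2 * 2 ^ k) + x ^ (2 * 2 ^ l)) * (x ^ (4 * 2 ^ k) + x ^ (4 * 2 ^ l)))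

/-!
Let `J = ε ⊗ ε` with `ε = !![0, 1; -1, 0]`, so that `uᵀ J u = 2 det u` when `u ∈ ℂ² ⊗ ℂ²` is read
as a `2 × 2` matrix; product vectors are isotropic for `J`. For the orthonormal basis `vⱼ = U ξⱼ`
the matrix `D = (vᵢᵀ J vⱼ)` is symmetric and unitary, and `∑ cⱼ vⱼ` can only be a product vector
if `cᵀ D c = 0`. If the first three states stay product, `D` vanishes at `(0,0), (1,1), (2,2)`;
unitarity then forces `D 3 3 = 0` and splits `{0,1,2,3}` into two pairs `{i,j} | {k,l}` with
`D i j = D k l = 0`, so that the block `M` of `D` with rows `i, j` and columns `k, l` is unitary.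
The last two states give `uᵀ M w = 0` and `(u²)ᵀ M (w²) = 0` with `u = (x^{2^i}, x^{2^j})`,
`w = (x^{2^k}, x^{2^l})`. In `ℂ²` they fix `M w` and `M w²` up to scalars, and comparing
`⟪M w, M w²⟫ = ∑ wᵢ³` with `‖M w‖² = ∑ wᵢ²` and `‖M w²‖² = ∑ wᵢ⁴` yields `f^{(2)}_{ij|kl}(x) = 0`.
-/

open Matrix ComplexConjugate Complex
open scoped Kronecker

section DetForm

def detForm : Matrix (Fin 2 × Fin 2) (Fin 2 × Fin 2) ℂ :=
  !![0, 1; -1, 0] ⊗ₖ !![0, 1; -1, 0]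

lemma detForm_mem_unitaryGroup : detForm ∈ unitaryGroup (Fin 2 × Fin 2) ℂ := by
  have hε : !![(0 : ℂ), 1; -1, 0] ∈ unitary (Matrix (Fin 2) (Fin 2) ℂ) := by
    rw [Unitary.mem_iff, star_eq_conjTranspose]
    constructor <;> ext i j <;> fin_cases i <;> fin_cases j <;> simp [mul_apply]
  exact kronecker_mem_unitary hε hε

lemma transpose_detForm : detFormᵀ = detForm := by
  ext ⟨a, b⟩ ⟨c, d⟩
  fin_cases a <;> fin_cases b <;> fin_cases c <;> fin_cases d <;> simp [detForm]

lemma dotProduct_detForm_mulVec_self (u : Fin 2 × Fin 2 → ℂ) :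
    u ⬝ᵥ detForm *ᵥ u = 2 * (u (0, 0) * u (1, 1) - u (0, 1) * u (1, 0)) := by
  simp only [dotProduct, mulVec, detForm, kroneckerMap_apply, of_apply, cons_val', cons_val_fin_one,
    Fintype.sum_prod_type, Fin.sum_univ_two, cons_val_zero, cons_val_one, mul_zero, zero_mul,
    mul_one, zero_add, mul_neg, neg_mul, add_zero, one_mul, neg_zero, neg_neg]
  ring

lemma ProdVec.dotProduct_detForm_mulVec_self_eq_zero {ψ : EuclideanSpace ℂ (Fin 2 × Fin 2)}
    (h : ProdVec 2 2 ψ) : ψ.ofLp ⬝ᵥ detForm *ᵥ ψ.ofLp = 0 := by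
  obtain ⟨u, v, huv⟩ := h
  rw [dotProduct_detForm_mulVec_self]
  simp only [huv]
  ring

end DetForm

section DetGram

lemma Matrix.mul_mul_transpose_mem_unitaryGroup {m n α : Type*} [Fintype m] [DecidableEq m]
    [Fintype n] [DecidableEq n] [CommRing α] [StarRing α] {W : Matrix n m α}
    (hW : W * Wᴴ = 1) (hW' : Wᴴ * W = 1) {J : Matrix m m α} (hJ : J ∈ unitaryGroup m α) :
    W * J * Wᵀ ∈ unitaryGroup n α := by
  have hWt : Wᵀ * Wᵀᴴ = 1 := by
    rw [conjTranspose_transpose_eq_transpose_conjTranspose, ← transpose_mul, hW', transpose_one]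
  rw [mem_unitaryGroup_iff, star_eq_conjTranspose, conjTranspose_mul, conjTranspose_mul]
  calc W * J * Wᵀ * (Wᵀᴴ * (Jᴴ * Wᴴ)) = W * (J * (Wᵀ * Wᵀᴴ) * Jᴴ) * Wᴴ := by
        simp only [Matrix.mul_assoc]
    _ = 1 := by rw [hWt, Matrix.mul_one, ← star_eq_conjTranspose, hJ.2, Matrix.mul_one, hW]

lemma Orthonormal.mul_conjTranspose_eq_one {𝕜 m n : Type*} [RCLike 𝕜] [Fintype m]
    [DecidableEq n] {v : n → EuclideanSpace 𝕜 m} (hv : Orthonormal 𝕜 v) :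
    Matrix.of (fun i => (v i).ofLp) * (Matrix.of fun i => (v i).ofLp)ᴴ = 1 := by
  ext i j
  have h := orthonormal_iff_ite.mp hv j i
  rw [EuclideanSpace.inner_eq_star_dotProduct] at h
  simpa [mul_apply, one_apply, dotProduct, eq_comm] using h

variable {n : Type*} (v : n → EuclideanSpace ℂ (Fin 2 × Fin 2))

def detGram : Matrix n n ℂ := Matrix.of fun i j => (v i).ofLp ⬝ᵥ detForm *ᵥ (v j).ofLp

lemma detGram_eq :
    detGram v = Matrix.of (fun i => (v i).ofLp) * detForm * (Matrix.of fun i => (v i).ofLp)ᵀ := by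
  ext i j
  simp only [detGram, of_apply, mul_apply, dotProduct, mulVec, transpose_apply, Finset.mul_sum,
    Finset.sum_mul]
  rw [Finset.sum_comm]
  exact Finset.sum_congr rfl fun _ _ => Finset.sum_congr rfl fun _ _ => by ring

lemma isSymm_detGram : (detGram v).IsSymm := by
  rw [IsSymm, detGram_eq, transpose_mul, transpose_mul, transpose_transpose, transpose_detForm,
    Matrix.mul_assoc]

lemma dotProduct_detGram_mulVec [Fintype n] (c : n → ℂ) :
    c ⬝ᵥ detGram v *ᵥ c = (∑ i, c i • v i).ofLp ⬝ᵥ detForm *ᵥ (∑ i, c i • v i).ofLp := by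
  set W := Matrix.of fun i => (v i).ofLp
  have hsum : (∑ i, c i • v i).ofLp = c ᵥ* W := by
    ext p; simp [W, vecMul, dotProduct]
  rw [hsum, detGram_eq, dotProduct_mulVec, ← vecMul_vecMul, ← dotProduct_mulVec,
    ← vecMul_transpose, transpose_transpose, ← vecMul_vecMul, dotProduct_mulVec]

lemma detGram_mem_unitaryGroup [Fintype n] [DecidableEq n] (hv : Orthonormal ℂ v)
    (hn : Fintype.card n = 4) : detGram v ∈ unitaryGroup n ℂ := by
  have hW := hv.mul_conjTranspose_eq_one
  rw [detGram_eq]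
  exact mul_mul_transpose_mem_unitaryGroup hW
    ((mul_eq_one_comm_of_card_eq _ _ _ (by simp [hn])).mp hW) detForm_mem_unitaryGroup

end DetGram

section Unitary

variable {n : Type*} [Fintype n] [DecidableEq n] {M : Matrix n n ℂ}

lemma Matrix.sum_mul_conj_of_mem_unitaryGroup (hM : M ∈ unitaryGroup n ℂ) (i j : n) :
    ∑ k, M i k * conj (M j k) = if i = j then 1 else 0 := by
  simpa [mul_apply, one_apply] using congr_fun (congr_fun (mem_unitaryGroup_iff.mp hM) i) j

lemma Matrix.sum_normSq_of_mem_unitaryGroup (hM : M ∈ unitaryGroup n ℂ) (i : n) :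
    ∑ k, normSq (M i k) = 1 := by
  have h := sum_mul_conj_of_mem_unitaryGroup hM i i
  simp only [mul_conj, if_true] at h
  exact_mod_cast h

lemma Matrix.star_mulVec_dotProduct_mulVec (hM : M ∈ unitaryGroup n ℂ) (a b : n → ℂ) :
    star (M *ᵥ a) ⬝ᵥ M *ᵥ b = star a ⬝ᵥ b := by
  rw [star_mulVec, ← dotProduct_mulVec, mulVec_mulVec, ← star_eq_conjTranspose,
    mem_unitaryGroup_iff'.mp hM, one_mulVec]

end Unitary

lemma sum_even_pow_ne_zero {ι : Type*} [Fintype ι] {u : ι → ℝ} (hu : u ≠ 0) {k : ℕ}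
    (hk : Even k) (hk0 : k ≠ 0) : ∑ i, u i ^ k ≠ 0 := by
  intro h
  rw [Finset.sum_eq_zero_iff_of_nonneg fun i _ => hk.pow_nonneg (u i)] at h
  exact hu (funext fun i => pow_eq_zero_iff hk0 |>.mp (h i (Finset.mem_univ i)))

theorem power_sum_identity_of_orthogonal {u : Fin 2 → ℝ} (hu : u ≠ 0) {z y : Fin 2 → ℂ}
    {W₂ W₃ W₄ : ℝ} (h1 : (fun i => (u i : ℂ)) ⬝ᵥ z = 0) (h2 : (fun i => (u i : ℂ) ^ 2) ⬝ᵥ y = 0)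
    (E1 : star z ⬝ᵥ z = W₂) (E2 : star z ⬝ᵥ y = W₃) (E3 : star y ⬝ᵥ y = W₄) :
    W₃ ^ 2 * ((∑ i, u i ^ 2) * ∑ i, u i ^ 4) = (∑ i, u i ^ 3) ^ 2 * (W₂ * W₄) := by
  simp only [dotProduct, Pi.star_apply, RCLike.star_def, Fin.sum_univ_two] at E1 E2 E3 h1 h2
  have h1c : (u 0 : ℂ) * conj (z 0) + u 1 * conj (z 1) = 0 := by simpa using congrArg conj h1
  -- `z ⊥ u` and `y ⊥ u²`, so `z` and `y` are determined by their coordinates `α`, `β` along the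
  -- rotated vectors `(-u 1, u 0)` and `(-u 1 ^ 2, u 0 ^ 2)`; Lagrange's identity gives L1–L3.
  set α := (u 0 : ℂ) * z 1 - u 1 * z 0
  set β := (u 0 : ℂ) ^ 2 * y 1 - u 1 ^ 2 * y 0
  have L1 : ((u 0 : ℂ) ^ 2 + u 1 ^ 2) * W₂ = conj α * α := by
    simp only [α, map_sub, map_mul, conj_ofReal]
    linear_combination (-((u 0 : ℂ) ^ 2 + u 1 ^ 2)) * E1
      + (u 0 * conj (z 0) + u 1 * conj (z 1)) * h1
  have L3 : ((u 0 : ℂ) ^ 4 + u 1 ^ 4) * W₄ = conj β * β := by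
    simp only [β, map_sub, map_mul, map_pow, conj_ofReal]
    linear_combination (-((u 0 : ℂ) ^ 4 + u 1 ^ 4)) * E3
      + (u 0 ^ 2 * conj (y 0) + u 1 ^ 2 * conj (y 1)) * h2
  have L2 : ((u 0 : ℂ) ^ 2 + u 1 ^ 2) * (u 0 ^ 4 + u 1 ^ 4) * W₃
      = conj α * β * (u 0 ^ 3 + u 1 ^ 3) := by
    simp only [α, β, map_sub, map_mul, conj_ofReal]
    linear_combination (-((u 0 : ℂ) ^ 2 + u 1 ^ 2) * (u 0 ^ 4 + u 1 ^ 4)) * E2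
      + ((u 0 ^ 2 * y 0 + u 1 ^ 2 * y 1) * (u 0 ^ 3 + u 1 ^ 3)
        + (u 0 ^ 2 * y 1 - u 1 ^ 2 * y 0) * (u 1 * u 0 ^ 2 - u 0 * u 1 ^ 2)) * h1c
      + (u 0 * conj (z 1) - u 1 * conj (z 0)) * (u 0 * u 1 ^ 2 - u 1 * u 0 ^ 2) * h2
  have L2c : ((u 0 : ℂ) ^ 2 + u 1 ^ 2) * (u 0 ^ 4 + u 1 ^ 4) * W₃
      = α * conj β * (u 0 ^ 3 + u 1 ^ 3) := by
    simpa using congrArg conj L2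
  clear_value α β
  have key : ((u 0 ^ 2 + u 1 ^ 2) * (u 0 ^ 4 + u 1 ^ 4)) *
      (W₃ ^ 2 * ((u 0 ^ 2 + u 1 ^ 2) * (u 0 ^ 4 + u 1 ^ 4))
        - (u 0 ^ 3 + u 1 ^ 3) ^ 2 * (W₂ * W₄)) = 0 := by
    have : ((u 0 : ℂ) ^ 2 + u 1 ^ 2) * (u 0 ^ 4 + u 1 ^ 4) *
      (W₃ ^ 2 * ((u 0 ^ 2 + u 1 ^ 2) * (u 0 ^ 4 + u 1 ^ 4))
        - (u 0 ^ 3 + u 1 ^ 3) ^ 2 * (W₂ * W₄)) = 0 := by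
      linear_combination ((u 0 : ℂ) ^ 2 + u 1 ^ 2) * (u 0 ^ 4 + u 1 ^ 4) * W₃ * L2c
        + α * conj β * (u 0 ^ 3 + u 1 ^ 3) * L2
        - ((u 0 : ℂ) ^ 4 + u 1 ^ 4) * W₄ * (u 0 ^ 3 + u 1 ^ 3) ^ 2 * L1
        - conj α * α * (u 0 ^ 3 + u 1 ^ 3) ^ 2 * L3
    exact_mod_cast this
  have hS2 : ∑ i, u i ^ 2 ≠ 0 := sum_even_pow_ne_zero hu even_two two_ne_zero
  have hS4 : ∑ i, u i ^ 4 ≠ 0 := sum_even_pow_ne_zero hu (by decide) four_ne_zero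
  simp only [Fin.sum_univ_two] at hS2 hS4 ⊢
  linear_combination (mul_eq_zero.mp key).resolve_left (mul_ne_zero hS2 hS4)

theorem power_sum_identity_of_mem_unitaryGroup {M : Matrix (Fin 2) (Fin 2) ℂ}
    (hM : M ∈ unitaryGroup (Fin 2) ℂ) {u w : Fin 2 → ℝ} (hu : u ≠ 0)
    (h1 : (fun i => (u i : ℂ)) ⬝ᵥ M *ᵥ (fun i => (w i : ℂ)) = 0)
    (h2 : (fun i => (u i : ℂ) ^ 2) ⬝ᵥ M *ᵥ (fun i => (w i : ℂ) ^ 2) = 0) :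
    (∑ i, w i ^ 3) ^ 2 * ((∑ i, u i ^ 2) * ∑ i, u i ^ 4) =
      (∑ i, u i ^ 3) ^ 2 * ((∑ i, w i ^ 2) * ∑ i, w i ^ 4) := by
  refine power_sum_identity_of_orthogonal hu h1 h2 ?_ ?_ ?_ <;>
    rw [star_mulVec_dotProduct_mulVec hM] <;>
    simp only [dotProduct, Pi.star_apply, RCLike.star_def, conj_ofReal, map_pow,
      Fin.sum_univ_two] <;> push_cast <;> ring

namespace Matrix.IsSymm

variable {D : Matrix (Fin 4) (Fin 4) ℂ} (hS : D.IsSymm) (hU : D ∈ unitaryGroup (Fin 4) ℂ)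
include hS hU

lemma pairing_eq_zero_of_mem_unitaryGroup (h0 : D 0 0 = 0) (h1 : D 1 1 = 0) (h2 : D 2 2 = 0) :
    (D 0 1 = 0 ∧ D 2 3 = 0) ∨ (D 0 2 = 0 ∧ D 1 3 = 0) ∨ (D 0 3 = 0 ∧ D 1 2 = 0) := by
  have O01 := sum_mul_conj_of_mem_unitaryGroup hU 0 1
  have O02 := sum_mul_conj_of_mem_unitaryGroup hU 0 2
  have O12 := sum_mul_conj_of_mem_unitaryGroup hU 1 2
  have N0 := sum_normSq_of_mem_unitaryGroup hU 0
  simp only [Fin.sum_univ_four, h0, h1, h2, hS.apply 0 1, hS.apply 0 2, hS.apply 1 2, map_zero,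
    zero_mul, mul_zero, add_zero, zero_add, zero_ne_one, ↓reduceIte, Fin.reduceEq] at O01 O02 O12 N0
  set a := D 0 1; set b := D 0 2; set c := D 0 3; set p := D 1 2; set q := D 1 3; set r := D 2 3
  by_cases hc : c = 0
  · by_cases hp : p = 0
    · exact Or.inr (Or.inr ⟨hc, hp⟩)
    · have ha : a = 0 := by simpa [hc, hp] using O02
      have hb : b = 0 := by simpa [hc, hp] using O01
      simp [ha, hb, hc] at N0
  · have hO01c : conj b * p + conj c * q = 0 := by
      simpa using congrArg conj O01
    have hab : a * conj b * ↑(normSq c + normSq p) = 0 := by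
      push_cast [← mul_conj]
      linear_combination c * conj c * O12 - c * conj r * hO01c + conj b * p * O02
    have hcp : (normSq c + normSq p : ℝ) ≠ 0 :=
      (add_pos_of_pos_of_nonneg (normSq_pos.mpr hc) (normSq_nonneg p)).ne'
    rcases mul_eq_zero.mp (mul_eq_zero.mp hab |>.resolve_right (by exact_mod_cast hcp)) with
      ha | hb
    · exact Or.inl ⟨ha, by simpa [ha, hc] using O02⟩
    · have hb : b = 0 := by simpa using hb
      exact Or.inr (Or.inl ⟨hb, by simpa [hb, hc] using O01⟩)

lemma apply_three_three_eq_zero_of_mem_unitaryGroup (h0 : D 0 0 = 0) (h1 : D 1 1 = 0)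
    (h2 : D 2 2 = 0) : D 3 3 = 0 := by
  have N := sum_normSq_of_mem_unitaryGroup hU
  have N0 := N 0; have N1 := N 1; have N2 := N 2; have N3 := N 3
  simp only [Fin.sum_univ_four, h0, h1, h2, hS.apply 0 1, hS.apply 0 2, hS.apply 0 3,
    hS.apply 1 2, hS.apply 1 3, hS.apply 2 3, map_zero] at N0 N1 N2 N3
  rw [← normSq_eq_zero]
  rcases pairing_eq_zero_of_mem_unitaryGroup hS hU h0 h1 h2 with
    ⟨h, h'⟩ | ⟨h, h'⟩ | ⟨h, h'⟩ <;>
    simp only [h, h', map_zero, zero_add, add_zero] at N0 N1 N2 N3 <;> linarith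

theorem power_sum_identity_of_pairing (hdiag : ∀ a, D a a = 0) {t : Fin 4 → ℝ}
    (h1 : (fun i => (t i : ℂ)) ⬝ᵥ D *ᵥ (fun i => (t i : ℂ)) = 0)
    (h2 : (fun i => (t i : ℂ) ^ 2) ⬝ᵥ D *ᵥ (fun i => (t i : ℂ) ^ 2) = 0)
    (σ : Equiv.Perm (Fin 4)) (ht : ![t (σ 0), t (σ 1)] ≠ 0)
    (h01 : D (σ 0) (σ 1) = 0) (h23 : D (σ 2) (σ 3) = 0) :
    (∑ i, ![t (σ 2), t (σ 3)] i ^ 3) ^ 2 *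
        ((∑ i, ![t (σ 0), t (σ 1)] i ^ 2) * ∑ i, ![t (σ 0), t (σ 1)] i ^ 4) =
      (∑ i, ![t (σ 0), t (σ 1)] i ^ 3) ^ 2 *
        ((∑ i, ![t (σ 2), t (σ 3)] i ^ 2) * ∑ i, ![t (σ 2), t (σ 3)] i ^ 4) := by
  have hsum : ∀ f : Fin 4 → ℂ, ∑ i, f i = f (σ 0) + f (σ 1) + f (σ 2) + f (σ 3) := fun f => by
    rw [← Equiv.sum_comp σ, Fin.sum_univ_four]
  set M : Matrix (Fin 2) (Fin 2) ℂ :=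
    !![D (σ 0) (σ 2), D (σ 0) (σ 3); D (σ 1) (σ 2), D (σ 1) (σ 3)]
  have hrow : ∀ a b : Fin 2, ∑ k, M a k * conj (M b k) = if a = b then 1 else 0 := by
    intro a b
    have h := sum_mul_conj_of_mem_unitaryGroup hU (σ (Fin.castAdd 2 a)) (σ (Fin.castAdd 2 b))
    simp only [hsum, σ.injective.eq_iff, (Fin.castAdd_injective 2 2).eq_iff] at h
    fin_cases a <;> fin_cases b <;>
      simpa [M, Fin.sum_univ_two, hdiag, h01, hS.apply (σ 0) (σ 1)] using h
  have hM : M ∈ unitaryGroup (Fin 2) ℂ := by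
    rw [mem_unitaryGroup_iff]
    ext a b
    simpa [mul_apply, one_apply] using hrow a b
  have hquad : ∀ c : Fin 4 → ℂ,
      c ⬝ᵥ D *ᵥ c = 2 * (![c (σ 0), c (σ 1)] ⬝ᵥ M *ᵥ ![c (σ 2), c (σ 3)]) := by
    intro c
    simp only [dotProduct, mulVec, hsum, hdiag, h01, h23, hS.apply (σ 0) (σ 1),
      hS.apply (σ 2) (σ 3), hS.apply (σ 0) (σ 2), hS.apply (σ 0) (σ 3), hS.apply (σ 1) (σ 2),
      hS.apply (σ 1) (σ 3)]
    simp only [M, of_apply, cons_val', cons_val_fin_one, cons_val_zero, cons_val_one,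
      Fin.sum_univ_two, zero_mul, add_zero, zero_add]
    ring
  refine power_sum_identity_of_mem_unitaryGroup hM ht ?_ ?_
  · rw [hquad] at h1
    simpa [dotProduct, Fin.sum_univ_two] using h1
  · rw [hquad] at h2
    simpa [dotProduct, Fin.sum_univ_two] using h2

end Matrix.IsSymm

lemma fval_eq_zero_iff (x : ℝ) (i j k l : ℕ) :
    fval x i j k l = 0 ↔
      (∑ a, ![x ^ 2 ^ k, x ^ 2 ^ l] a ^ 3) ^ 2 *
          ((∑ a, ![x ^ 2 ^ i, x ^ 2 ^ j] a ^ 2) * ∑ a, ![x ^ 2 ^ i, x ^ 2 ^ j] a ^ 4) =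
        (∑ a, ![x ^ 2 ^ i, x ^ 2 ^ j] a ^ 3) ^ 2 *
          ((∑ a, ![x ^ 2 ^ k, x ^ 2 ^ l] a ^ 2) * ∑ a, ![x ^ 2 ^ k, x ^ 2 ^ l] a ^ 4) := by
  simp only [fval, Fin.sum_univ_two, Matrix.cons_val_zero, Matrix.cons_val_one, ← pow_mul,
    mul_comm _ 3, mul_comm _ 2, mul_comm _ 4, sub_eq_zero]

theorem fval_eq_zero_of_pairing {x : ℝ} (hx : x ≠ 0) {D : Matrix (Fin 4) (Fin 4) ℂ}
    (hS : D.IsSymm) (hU : D ∈ unitaryGroup (Fin 4) ℂ) (hdiag : ∀ a, D a a = 0)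
    (h1 : (fun j : Fin 4 => ((x ^ 2 ^ ((j : ℕ) + 1) : ℝ) : ℂ)) ⬝ᵥ
      D *ᵥ (fun j : Fin 4 => ((x ^ 2 ^ ((j : ℕ) + 1) : ℝ) : ℂ)) = 0)
    (h2 : (fun j : Fin 4 => ((x ^ 2 ^ ((j : ℕ) + 1) : ℝ) : ℂ) ^ 2) ⬝ᵥ
      D *ᵥ (fun j : Fin 4 => ((x ^ 2 ^ ((j : ℕ) + 1) : ℝ) : ℂ) ^ 2) = 0)
    (σ : Equiv.Perm (Fin 4)) (h01 : D (σ 0) (σ 1) = 0) (h23 : D (σ 2) (σ 3) = 0) :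
    fval x (σ 0 + 1) (σ 1 + 1) (σ 2 + 1) (σ 3 + 1) = 0 := by
  rw [fval_eq_zero_iff]
  refine hS.power_sum_identity_of_pairing hU hdiag h1 h2 σ (fun h => ?_) h01 h23
  simpa [hx] using congr_fun h 0

theorem stmt19 (x : ℝ) (hx : x ∈ Set.Ioo (0 : ℝ) 1)
    (hroot1 : fval x 1 2 3 4 ≠ 0)
    (hroot2 : fval x 1 3 2 4 ≠ 0)
    (hroot3 : fval x 1 4 2 3 ≠ 0)
    (ξ : Fin 4 → EuclideanSpace ℂ (Fin 2 × Fin 2))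
    (hON : Orthonormal ℂ ξ)
    (ψ : Fin 5 → EuclideanSpace ℂ (Fin 2 × Fin 2))
    (hψ0 : ψ 0 = ξ 0) (hψ1 : ψ 1 = ξ 1) (hψ2 : ψ 2 = ξ 2)
    (hψ3 : ψ 3 = ∑ j : Fin 4, ((x : ℂ) ^ (2 ^ ((j : ℕ) + 1))) • ξ j)
    (hψ4 : ψ 4 = ∑ j : Fin 4, ((x : ℂ) ^ (2 * 2 ^ ((j : ℕ) + 1))) • ξ j) :
    ∀ U : EuclideanSpace ℂ (Fin 2 × Fin 2) ≃ₗᵢ[ℂ] EuclideanSpace ℂ (Fin 2 × Fin 2),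
      ∃ m : Fin 5, ¬ ProdVec 2 2 (U (ψ m)) := by
  intro U
  by_contra! hprod
  set v := fun j => U (ξ j)
  have hU := detGram_mem_unitaryGroup v (U.toLinearIsometry.orthonormal_comp_iff.mpr hON) (by simp)
  have hS := isSymm_detGram v
  have h0 : detGram v 0 0 = 0 := (hψ0 ▸ hprod 0).dotProduct_detForm_mulVec_self_eq_zero
  have h1 : detGram v 1 1 = 0 := (hψ1 ▸ hprod 1).dotProduct_detForm_mulVec_self_eq_zero
  have h2 : detGram v 2 2 = 0 := (hψ2 ▸ hprod 2).dotProduct_detForm_mulVec_self_eq_zero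
  have hdiag : ∀ a, detGram v a a = 0 := by
    have h3 := hS.apply_three_three_eq_zero_of_mem_unitaryGroup hU h0 h1 h2
    intro a; fin_cases a <;> assumption
  have hcomb : ∀ m (c : Fin 4 → ℂ), ψ m = ∑ j, c j • ξ j → c ⬝ᵥ detGram v *ᵥ c = 0 :=
    fun m c h => by
      rw [dotProduct_detGram_mulVec]
      simpa [v, h, map_sum, map_smul] using (hprod m).dotProduct_detForm_mulVec_self_eq_zero
  have key := fval_eq_zero_of_pairing hx.1.ne' hS hU hdiag
    (hcomb 3 _ (by rw [hψ3]; simp)) (hcomb 4 _ (by rw [hψ4]; simp [← pow_mul, mul_comm]))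
  rcases hS.pairing_eq_zero_of_mem_unitaryGroup hU h0 h1 h2 with
    ⟨h01, h23⟩ | ⟨h02, h13⟩ | ⟨h03, h12⟩
  · exact hroot1 (key 1 h01 h23)
  · exact hroot2 (by simpa [Equiv.swap_apply_def] using key (Equiv.swap 1 2) h02 h13)
  · have H := key (Equiv.swap 1 3 * Equiv.swap 2 3)
      (by simpa [Equiv.swap_apply_def] using h03) (by simpa [Equiv.swap_apply_def] using h12)
    exact hroot3 (by simpa [Equiv.swap_apply_def] using H)
end
end
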